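/- arXiv:1302.6447 — 7 statements merged into one kernel-verified Lean document; each statement's English description precedes it below -/
import Mathlib

section
/- Let X be a Fréchet space, F a finite-dimensional subspace of X, p a continuous seminorm on X, and ε > 0. Then there exists a closed subspace E of X of finite codimension such that for all x ∈ E and y ∈ F, p(x + y) ≥ max(p(x)/(2+ε), p(y)/(1+ε)). -/
/-!
The `p`-unit sphere of `F` is compact modulo `p`-null vectors, so finitely many functionals `φ`
dominated by `p` satisfy: every `y ∈ F` has some `φ` with `p y ≤ (1 + ε) ‖φ y‖`. Extend these
functionals to `X` by Hahn–Banach and let `E` be their common kernel. For `x ∈ E` and `y ∈ F`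
some `φ` gives `p y ≤ (1 + ε) ‖φ (x + y)‖ ≤ (1 + ε) p (x + y)`, and `p x ≤ p (x + y) + p y`
gives the bound on `p x`.
-/

theorem LinearMap.continuous_of_norm_le_seminorm {𝕜 X : Type*} [NormedField 𝕜]
    [AddCommGroup X] [Module 𝕜 X] [TopologicalSpace X] [IsTopologicalAddGroup X]
    {p : Seminorm 𝕜 X} (hp : Continuous p) (g : X →ₗ[𝕜] 𝕜) (hg : ∀ x, ‖g x‖ ≤ p x) :
    Continuous g := by
  refine continuous_of_tendsto_nhds_zero g (tendsto_zero_iff_norm_tendsto_zero.2 ?_)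
  exact squeeze_zero (fun _ => norm_nonneg _) hg (map_zero p ▸ hp.tendsto 0)

theorem exists_finset_strongDual_norming {𝕜 V : Type*} [RCLike 𝕜] [NormedAddCommGroup V]
    [NormedSpace 𝕜 V] [FiniteDimensional 𝕜 V] {δ : ℝ} (hδ : 0 < δ) :
    ∃ s : Finset (StrongDual 𝕜 V), (∀ g ∈ s, ‖g‖ ≤ 1) ∧ ∀ v, ∃ g ∈ s, ‖v‖ ≤ (1 + δ) * ‖g v‖ := by
  classical
  have : ProperSpace V := FiniteDimensional.proper 𝕜 V
  let ball := Metric.closedBall (0 : StrongDual 𝕜 V) 1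
  let U : ball → Set V := fun g => {v | ‖v‖ < (1 + δ) * ‖(g : StrongDual 𝕜 V) v‖}
  have hU : ∀ g, IsOpen (U g) := fun g =>
    isOpen_lt continuous_norm (continuous_const.mul (g : StrongDual 𝕜 V).continuous.norm)
  have hcover : Metric.sphere (0 : V) 1 ⊆ ⋃ g, U g := by
    intro v hv
    rw [mem_sphere_zero_iff_norm] at hv
    obtain ⟨g, hg1, hgv⟩ := exists_dual_vector'' 𝕜 v
    refine Set.mem_iUnion.2 ⟨⟨g, mem_closedBall_zero_iff.2 hg1⟩, ?_⟩
    simp only [U, Set.mem_ofPred_eq, hgv, RCLike.norm_ofReal, hv, abs_one]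
    linarith
  obtain ⟨t, ht⟩ := (isCompact_sphere (0 : V) 1).elim_finite_subcover U hU hcover
  refine ⟨insert 0 (t.image Subtype.val), ?_, fun v => ?_⟩
  · simp only [Finset.mem_insert, Finset.mem_image]
    rintro g (rfl | ⟨g, -, rfl⟩)
    · simp
    · exact mem_closedBall_zero_iff.1 g.2
  rcases eq_or_ne v 0 with rfl | hv
  · exact ⟨0, Finset.mem_insert_self _ _, by simp⟩
  have hvn : 0 < ‖v‖ := norm_pos_iff.2 hv
  have hw : (‖v‖⁻¹ : 𝕜) • v ∈ Metric.sphere (0 : V) 1 := by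
    rw [mem_sphere_zero_iff_norm, norm_smul, norm_inv, RCLike.norm_ofReal, abs_of_pos hvn,
      inv_mul_cancel₀ hvn.ne']
  obtain ⟨g, hgt, hgw⟩ := Set.mem_iUnion₂.1 (ht hw)
  refine ⟨g, Finset.mem_insert_of_mem (Finset.mem_image_of_mem _ hgt), ?_⟩
  have hscaled : ‖v‖⁻¹ * ‖v‖ < ‖v‖⁻¹ * ((1 + δ) * ‖(g : StrongDual 𝕜 V) v‖) := by
    simpa only [U, Set.mem_ofPred_eq, norm_smul, map_smul, norm_inv, RCLike.norm_ofReal,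
      abs_of_pos hvn, mul_left_comm _ (‖v‖⁻¹)] using hgw
  exact (lt_of_mul_lt_mul_left hscaled (inv_nonneg.2 hvn.le)).le

theorem Seminorm.exists_finset_dual_norming {𝕜 F : Type*} [RCLike 𝕜] [AddCommGroup F]
    [Module 𝕜 F] [Module.Finite 𝕜 F] (q : Seminorm 𝕜 F) {δ : ℝ} (hδ : 0 < δ) :
    ∃ s : Finset (Module.Dual 𝕜 F), (∀ f ∈ s, ∀ y, ‖f y‖ ≤ q y) ∧
      ∀ y, ∃ f ∈ s, q y ≤ (1 + δ) * ‖f y‖ := by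
  classical
  let : SeminormedAddCommGroup F := q.toAddGroupSeminorm.toSeminormedAddCommGroup
  let : NormedSpace 𝕜 F := ⟨fun a y => (map_smul_eq_mul q a y).le⟩
  let π := SeparationQuotient.mkCLM 𝕜 F
  have : FiniteDimensional 𝕜 (SeparationQuotient F) :=
    Module.Finite.of_surjective π.toLinearMap SeparationQuotient.surjective_mk
  obtain ⟨s, hs1, hs2⟩ := exists_finset_strongDual_norming (𝕜 := 𝕜)
    (V := SeparationQuotient F) hδ
  refine ⟨s.image fun g => (g.comp π).toLinearMap, ?_, fun y => ?_⟩
  · simp only [Finset.mem_image]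
    rintro _ ⟨g, hg, rfl⟩ y
    calc ‖g (π y)‖ ≤ ‖g‖ * ‖π y‖ := g.le_opNorm _
      _ ≤ 1 * q y := mul_le_mul (hs1 g hg) (SeparationQuotient.norm_mk y).le (norm_nonneg _)
          zero_le_one
      _ = q y := one_mul _
  · obtain ⟨g, hg, hgy⟩ := hs2 (π y)
    exact ⟨_, Finset.mem_image_of_mem _ hg, (SeparationQuotient.norm_mk y).symm.le.trans hgy⟩

theorem Module.Dual.exists_continuous_extension_of_norm_le {𝕜 X : Type*} [RCLike 𝕜]
    [AddCommGroup X] [Module 𝕜 X] [TopologicalSpace X] [IsTopologicalAddGroup X]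
    (S : Submodule 𝕜 X) (f : Module.Dual 𝕜 S) {p : Seminorm 𝕜 X} (hp : Continuous p)
    (hf : ∀ y, ‖f y‖ ≤ p y) :
    ∃ g : X →L[𝕜] 𝕜, (∀ y : S, g y = f y) ∧ ∀ x, ‖g x‖ ≤ p x := by
  obtain ⟨g, hgf, hgp⟩ := f.exists_extension_of_le_seminorm S hf
  exact ⟨⟨g, g.continuous_of_norm_le_seminorm hp hgp⟩, hgf, hgp⟩

theorem Submodule.exists_finset_strongDual_norming {𝕜 X : Type*} [RCLike 𝕜]
    [AddCommGroup X] [Module 𝕜 X] [TopologicalSpace X] [IsTopologicalAddGroup X]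
    (F : Submodule 𝕜 X) [Module.Finite 𝕜 F] {p : Seminorm 𝕜 X} (hp : Continuous p)
    {δ : ℝ} (hδ : 0 < δ) :
    ∃ s : Finset (X →L[𝕜] 𝕜), (∀ g ∈ s, ∀ x, ‖g x‖ ≤ p x) ∧
      ∀ y ∈ F, ∃ g ∈ s, p y ≤ (1 + δ) * ‖g y‖ := by
  classical
  obtain ⟨s, hs1, hs2⟩ := (p.comp F.subtype).exists_finset_dual_norming hδ
  have hext : ∀ f ∈ s, ∃ g : X →L[𝕜] 𝕜, (∀ y : F, g y = f y) ∧ ∀ x, ‖g x‖ ≤ p x :=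
    fun f hf => f.exists_continuous_extension_of_norm_le F hp (hs1 f hf)
  choose! ext hext_eq hext_le using hext
  refine ⟨s.image ext, ?_, fun y hy => ?_⟩
  · simp only [Finset.mem_image]
    rintro _ ⟨f, hf, rfl⟩
    exact hext_le f hf
  · obtain ⟨f, hf, hfy⟩ := hs2 ⟨y, hy⟩
    refine ⟨ext f, Finset.mem_image_of_mem _ hf, ?_⟩
    rwa [hext_eq f hf ⟨y, hy⟩]

theorem Seminorm.max_div_le_apply_add {𝕜 X : Type*} [SeminormedRing 𝕜] [AddGroup X]
    [SMul 𝕜 X] (p : Seminorm 𝕜 X) {x y : X} {ε : ℝ} (hε : 0 ≤ ε)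
    (h : p y ≤ (1 + ε) * p (x + y)) :
    max (p x / (2 + ε)) (p y / (1 + ε)) ≤ p (x + y) := by
  have hx : p x ≤ p (x + y) + p y := by
    simpa only [add_sub_cancel_right] using map_sub_le_add p (x + y) y
  refine max_le ?_ ?_
  · rw [div_le_iff₀ (by linarith)]
    linarith
  · rwa [div_le_iff₀ (by linarith), mul_comm]

theorem exists_closed_finite_codim_seminorm_estimate_general {𝕜 X : Type*} [RCLike 𝕜]
    [AddCommGroup X] [Module 𝕜 X] [UniformSpace X] [IsUniformAddGroup X]
    (F : Submodule 𝕜 X) (hF : Module.Finite 𝕜 F)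
    (p : Seminorm 𝕜 X) (hp : Continuous p) (ε : ℝ) (hε : 0 < ε) :
    ∃ E : Submodule 𝕜 X, IsClosed (E : Set X) ∧ Module.Finite 𝕜 (X ⧸ E) ∧
      ∀ x ∈ E, ∀ y ∈ F, p (x + y) ≥ max (p x / (2 + ε)) (p y / (1 + ε)) := by
  obtain ⟨s, hs_le, hs_norming⟩ := F.exists_finset_strongDual_norming hp hε
  let G : X →L[𝕜] (s → 𝕜) := ContinuousLinearMap.pi fun g => g.1
  refine ⟨(G : X →ₗ[𝕜] s → 𝕜).ker, G.isClosed_ker, ?_, fun x hx y hy => ?_⟩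
  · exact Module.Finite.equiv (G : X →ₗ[𝕜] s → 𝕜).quotKerEquivRange.symm
  obtain ⟨g, hg, hgy⟩ := hs_norming y hy
  have hgx : g x = 0 := congr_fun (LinearMap.mem_ker.1 hx) ⟨g, hg⟩
  refine p.max_div_le_apply_add hε.le (hgy.trans ?_)
  gcongr
  simpa [hgx] using hs_le g hg (x + y)

/-- In a Fréchet space, for any finite-dimensional subspace `F`, continuous seminorm `p`
and `ε > 0`, there is a closed subspace `E` of finite codimension such that
`p (x + y) ≥ max (p x / (2+ε)) (p y / (1+ε))` for `x ∈ E`, `y ∈ F`. -/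
theorem exists_closed_finite_codim_seminorm_estimate {𝕜 X : Type*} [RCLike 𝕜]
    [AddCommGroup X] [Module 𝕜 X] [UniformSpace X] [IsUniformAddGroup X]
    [ContinuousSMul 𝕜 X] [CompleteSpace X] [T2Space X]
    (pfam : ℕ → Seminorm 𝕜 X) (hpfam : WithSeminorms pfam)
    (F : Submodule 𝕜 X) (hF : Module.Finite 𝕜 F)
    (p : Seminorm 𝕜 X) (hp : Continuous p) (ε : ℝ) (hε : 0 < ε) :
    ∃ E : Submodule 𝕜 X, IsClosed (E : Set X) ∧ Module.Finite 𝕜 (X ⧸ E) ∧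
      ∀ x ∈ E, ∀ y ∈ F, p (x + y) ≥ max (p x / (2 + ε)) (p y / (1 + ε)) :=
  exists_closed_finite_codim_seminorm_estimate_general F hF p hp ε hε
end

section
/- Let X be a Fréchet space with increasing sequence of seminorms (p_n) defining its topology, and let (ε_n) be positive reals with ∏_n (1+ε_n) = K < ∞. Suppose (u_k)_{k≥1} ⊂ X satisfies p_1(u_n) = 1 for all n, and for all n, all j ≤ n and all scalars a_1, …, a_{n+1}: p_j(∑_{k=1}^n a_k u_k) ≤ (1+ε_n) p_j(∑_{k=1}^{n+1} a_k u_k). Then (u_k) is a basic sequence in X, and the closed linear span M_u of (u_k) satisfies M_u ∩ ker p_1 = {0}. -/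
open Filter Topology

/-- The kernel of a seminorm, as a submodule. -/
def Seminorm.kerSubmodule {𝕜 X : Type*} [NormedField 𝕜] [AddCommGroup X] [Module 𝕜 X]
    (p : Seminorm 𝕜 X) : Submodule 𝕜 X where
  carrier := {x | p x = 0}
  zero_mem' := map_zero p
  add_mem' := by
    intro a b ha hb
    simp only [Set.mem_setOf_eq] at *
    exact le_antisymm (by simpa [ha, hb] using map_add_le_add p a b) (apply_nonneg p _)
  smul_mem' := by
    intro c x hx
    simp only [Set.mem_setOf_eq] at *
    simp [map_smul_eq_mul, hx]
/-- A sequence is *basic* if every point of the closed linear span has a unique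
representation as a convergent series with respect to the sequence. -/
def IsBasicSequence (𝕜 : Type*) {X : Type*} [RCLike 𝕜] [AddCommGroup X] [Module 𝕜 X]
    [TopologicalSpace X] [IsTopologicalAddGroup X] [ContinuousSMul 𝕜 X] (u : ℕ → X) : Prop :=
  ∀ x ∈ (Submodule.span 𝕜 (Set.range u)).topologicalClosure,
    ∃! a : ℕ → 𝕜,
      Filter.Tendsto (fun N => ∑ k ∈ Finset.range N, a k • u k) Filter.atTop (nhds x)

/-!
Telescoping the perturbation inequalities gives
`p j (∑_{k<N} a k • u k) ≤ K * p j (∑_{k<M} a k • u k)` for `j < N ≤ M`, i.e. the partial-sum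
projections on the span of `u` are bounded by `K` in each seminorm `p j`; for `j = 0`, since
`p 0 (u m) = 1`, each coefficient is bounded by `2 * K * p 0` of the sum. Approximate a point `x` of
the closed span by finite combinations `y i`: their coefficients converge because they are
controlled by `p 0 (y i - y i')`, and passing the partial-sum bound to the limit shows that the
series with the limit coefficients converges to `x`. The coefficient bound gives uniqueness, and it
forces every coefficient of a point with `p 0 x = 0` to vanish.
-/

lemma prod_le_of_hasProd {ι : Type*} {c : ι → ℝ} {K : ℝ} (hc : ∀ i, 1 ≤ c i) (hK : HasProd c K)
    (s : Finset ι) : ∏ i ∈ s, c i ≤ K :=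
  ge_of_tendsto hK <| eventually_atTop.2 ⟨s, fun _ hst =>
    Finset.prod_le_prod_of_subset_of_one_le hst (fun i _ => zero_le_one.trans (hc i))
      fun i _ _ => hc i⟩

lemma cauchySeq_of_norm_sub_le {𝕜 X E : Type*} [NormedField 𝕜] [AddCommGroup X] [Module 𝕜 X]
    [TopologicalSpace X] [ContinuousSub X] [SeminormedAddCommGroup E]
    {q : Seminorm 𝕜 X} (hq : Continuous q) {y : ℕ → X} {x : X} (hy : Tendsto y atTop (𝓝 x))
    {f : ℕ → E} {C : ℝ} (hf : ∀ i i', ‖f i - f i'‖ ≤ C * q (y i - y i')) : CauchySeq f := by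
  rw [cauchySeq_iff_tendsto_dist_atTop_0]
  have hyy : Tendsto (fun n : ℕ × ℕ => y n.1 - y n.2) atTop (𝓝 (x - x)) := by
    rw [← prod_atTop_atTop_eq]
    exact (hy.comp tendsto_fst).sub (hy.comp tendsto_snd)
  have hlim : Tendsto (fun n : ℕ × ℕ => C * q (y n.1 - y n.2)) atTop (𝓝 0) := by
    simpa using ((hq.tendsto _).comp hyy).const_mul C
  exact squeeze_zero (fun _ => dist_nonneg) (fun n => (dist_eq_norm _ _).trans_le (hf _ _)) hlim

section PartialSum

variable {𝕜 X : Type*} [NormedField 𝕜] [AddCommGroup X] [Module 𝕜 X]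

def partialSum (u : ℕ → X) (a : ℕ → 𝕜) (N : ℕ) : X := ∑ k ∈ Finset.range N, a k • u k

lemma partialSum_zero (u : ℕ → X) (a : ℕ → 𝕜) : partialSum u a 0 = 0 := rfl

lemma partialSum_succ (u : ℕ → X) (a : ℕ → 𝕜) (N : ℕ) :
    partialSum u a (N + 1) = partialSum u a N + a N • u N :=
  Finset.sum_range_succ _ _

lemma partialSum_sub (u : ℕ → X) (a b : ℕ → 𝕜) (N : ℕ) :
    partialSum u (a - b) N = partialSum u a N - partialSum u b N := by
  simp [partialSum, sub_smul, Finset.sum_sub_distrib]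

lemma eventually_partialSum_sub_eq {u : ℕ → X} {a b : ℕ → 𝕜} {y z : X}
    (ha : ∀ᶠ N in atTop, partialSum u a N = y) (hb : ∀ᶠ N in atTop, partialSum u b N = z) :
    ∀ᶠ N in atTop, partialSum u (a - b) N = y - z := by
  filter_upwards [ha, hb] with N ha hb
  rw [partialSum_sub, ha, hb]

lemma exists_eventually_partialSum_eq_of_mem_span {u : ℕ → X} {y : X}
    (hy : y ∈ Submodule.span 𝕜 (Set.range u)) :
    ∃ c : ℕ → 𝕜, ∀ᶠ N in atTop, partialSum u c N = y := by
  obtain ⟨f, rfl⟩ := Finsupp.mem_span_range_iff_exists_finsupp.mp hy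
  obtain ⟨n, hn⟩ := f.support.exists_nat_subset_range
  refine ⟨f, eventually_atTop.2 ⟨n, fun N hN => ?_⟩⟩
  rw [partialSum, Finsupp.sum_of_support_subset f (hn.trans (Finset.range_subset_range.2 hN))]
  simp

lemma tendsto_partialSum [TopologicalSpace X] [ContinuousAdd X] [ContinuousSMul 𝕜 X]
    {ι : Type*} {l : Filter ι} (u : ℕ → X) {b : ι → ℕ → 𝕜} {a : ℕ → 𝕜}
    (hb : ∀ k, Tendsto (fun i => b i k) l (𝓝 (a k))) (N : ℕ) :
    Tendsto (fun i => partialSum u (b i) N) l (𝓝 (partialSum u a N)) :=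
  tendsto_finsetSum _ fun k _ => (hb k).smul_const (u k)

lemma seminorm_partialSum_le_prod_mul (p : ℕ → Seminorm 𝕜 X) (u : ℕ → X) {c : ℕ → ℝ}
    (hc : ∀ n, 0 ≤ c n)
    (hu : ∀ n, ∀ j ≤ n, ∀ a : ℕ → 𝕜,
      p j (partialSum u a (n + 1)) ≤ c n * p j (partialSum u a (n + 2)))
    (a : ℕ → 𝕜) {j n : ℕ} (hjn : j ≤ n) (d : ℕ) :
    p j (partialSum u a (n + 1)) ≤
      (∏ i ∈ Finset.Ico n (n + d), c i) * p j (partialSum u a (n + 1 + d)) := by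
  induction d with
  | zero => simp
  | succ d ih =>
    have hprod : 0 ≤ ∏ i ∈ Finset.Ico n (n + d), c i := Finset.prod_nonneg fun i _ => hc i
    calc p j (partialSum u a (n + 1))
        ≤ (∏ i ∈ Finset.Ico n (n + d), c i) * p j (partialSum u a (n + d + 1)) := by
          rwa [add_right_comm] at ih
      _ ≤ (∏ i ∈ Finset.Ico n (n + d), c i) * (c (n + d) * p j (partialSum u a (n + d + 2))) :=
          mul_le_mul_of_nonneg_left (hu (n + d) j (by omega) a) hprod
      _ = (∏ i ∈ Finset.Ico n (n + (d + 1)), c i) * p j (partialSum u a (n + 1 + (d + 1))) := by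
          rw [show n + (d + 1) = n + d + 1 by omega, show n + 1 + (d + 1) = n + d + 2 by omega,
            Finset.prod_Ico_succ_top (by omega), mul_assoc]

/-- Grünblum's criterion for the partial-sum projections, in the seminorm `p j` only for sums of
more than `j` terms. -/
def HasBoundedPartialSums (p : ℕ → Seminorm 𝕜 X) (u : ℕ → X) (K : ℝ) : Prop :=
  ∀ (a : ℕ → 𝕜) (j N M : ℕ), j < N → N ≤ M →
    p j (partialSum u a N) ≤ K * p j (partialSum u a M)

lemma hasBoundedPartialSums_of_hasProd {p : ℕ → Seminorm 𝕜 X} {u : ℕ → X} {c : ℕ → ℝ} {K : ℝ}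
    (hc : ∀ n, 1 ≤ c n) (hK : HasProd c K)
    (hu : ∀ n, ∀ j ≤ n, ∀ a : ℕ → 𝕜,
      p j (partialSum u a (n + 1)) ≤ c n * p j (partialSum u a (n + 2))) :
    HasBoundedPartialSums p u K := by
  intro a j N M hjN hNM
  obtain ⟨n, rfl⟩ : ∃ n, N = n + 1 := ⟨N - 1, by omega⟩
  obtain ⟨d, rfl⟩ := Nat.exists_eq_add_of_le hNM
  calc p j (partialSum u a (n + 1))
      ≤ (∏ i ∈ Finset.Ico n (n + d), c i) * p j (partialSum u a (n + 1 + d)) :=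
        seminorm_partialSum_le_prod_mul p u (fun n => zero_le_one.trans (hc n)) hu a (by omega) d
    _ ≤ K * p j (partialSum u a (n + 1 + d)) :=
        mul_le_mul_of_nonneg_right (prod_le_of_hasProd hc hK _) (apply_nonneg _ _)

namespace HasBoundedPartialSums

variable {p : ℕ → Seminorm 𝕜 X} {u : ℕ → X} {K : ℝ}

lemma one_le (hB : HasBoundedPartialSums p u K) (hu0 : p 0 (u 0) = 1) : 1 ≤ K := by
  simpa [partialSum, hu0] using hB (fun _ => 1) 0 1 1 one_pos le_rfl

lemma norm_coeff_le (hB : HasBoundedPartialSums p u K) (hu1 : ∀ n, p 0 (u n) = 1)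
    (a : ℕ → 𝕜) {m N : ℕ} (hmN : m < N) : ‖a m‖ ≤ 2 * K * p 0 (partialSum u a N) := by
  have hK := hB.one_le (hu1 0)
  have h_succ := hB a 0 (m + 1) N m.succ_pos hmN
  have h_self : p 0 (partialSum u a m) ≤ K * p 0 (partialSum u a N) := by
    rcases m.eq_zero_or_pos with rfl | hm
    · rw [partialSum_zero, map_zero]
      positivity
    · exact hB a 0 m N hm hmN.le
  calc ‖a m‖ = p 0 (partialSum u a (m + 1) - partialSum u a m) := by
        rw [partialSum_succ, add_sub_cancel_left, map_smul_eq_mul, hu1, mul_one]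
    _ ≤ p 0 (partialSum u a (m + 1)) + p 0 (partialSum u a m) := map_sub_le_add _ _ _
    _ ≤ 2 * K * p 0 (partialSum u a N) := by linarith

lemma norm_coeff_le_of_eventually_eq (hB : HasBoundedPartialSums p u K)
    (hu1 : ∀ n, p 0 (u n) = 1) {a : ℕ → 𝕜} {z : X}
    (hz : ∀ᶠ N in atTop, partialSum u a N = z) (m : ℕ) : ‖a m‖ ≤ 2 * K * p 0 z := by
  obtain ⟨N, hNz, hmN⟩ := (hz.and (eventually_gt_atTop m)).exists
  exact hNz ▸ hB.norm_coeff_le hu1 a hmN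

lemma eq_zero_of_tendsto [TopologicalSpace X] (hB : HasBoundedPartialSums p u K)
    (hu1 : ∀ n, p 0 (u n) = 1) (hp0 : Continuous (p 0)) {a : ℕ → 𝕜} {x : X}
    (ha : Tendsto (partialSum u a) atTop (𝓝 x)) (hx : p 0 x = 0) : a = 0 := by
  funext m
  have hlim : Tendsto (fun N => 2 * K * p 0 (partialSum u a N)) atTop (𝓝 0) := by
    simpa [hx] using ((hp0.tendsto x).comp ha).const_mul (2 * K)
  exact norm_le_zero_iff.mp <| ge_of_tendsto hlim <|
    (eventually_gt_atTop m).mono fun _ hmN => hB.norm_coeff_le hu1 a hmN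

lemma seminorm_partialSum_le_of_tendsto [TopologicalSpace X] [ContinuousAdd X]
    [ContinuousSMul 𝕜 X] (hB : HasBoundedPartialSums p u K) {j : ℕ} (hpj : Continuous (p j))
    {ι : Type*} {l : Filter ι} [l.NeBot] {b : ι → ℕ → 𝕜} {a : ℕ → 𝕜}
    (hb : ∀ k, Tendsto (fun i => b i k) l (𝓝 (a k))) {z : ι → X} {x : X}
    (hz : Tendsto z l (𝓝 x)) (hbz : ∀ i, ∀ᶠ N in atTop, partialSum u (b i) N = z i)
    {M : ℕ} (hjM : j < M) : p j (partialSum u a M) ≤ K * p j x := by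
  refine le_of_tendsto_of_tendsto' ((hpj.tendsto _).comp (tendsto_partialSum u hb M))
    (((hpj.tendsto x).comp hz).const_mul K) fun i => ?_
  obtain ⟨N, hNz, hMN⟩ := ((hbz i).and (eventually_ge_atTop M)).exists
  calc p j (partialSum u (b i) M) ≤ K * p j (partialSum u (b i) N) := hB _ j M N hjM hMN
    _ = K * p j (z i) := by rw [hNz]

lemma exists_tendsto_partialSum [CompleteSpace 𝕜] [TopologicalSpace X]
    [IsTopologicalAddGroup X] [ContinuousSMul 𝕜 X] [FrechetUrysohnSpace X]
    (hB : HasBoundedPartialSums p u K) (hu1 : ∀ n, p 0 (u n) = 1) (hp : WithSeminorms p)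
    {x : X} (hx : x ∈ (Submodule.span 𝕜 (Set.range u)).topologicalClosure) :
    ∃ a : ℕ → 𝕜, Tendsto (partialSum u a) atTop (𝓝 x) := by
  obtain ⟨y, hy_mem, hy⟩ := mem_closure_iff_seq_limit.mp hx
  choose c hc using fun i => exists_eventually_partialSum_eq_of_mem_span (hy_mem i)
  have hc_cauchy (k : ℕ) : CauchySeq (fun i => c i k) :=
    cauchySeq_of_norm_sub_le (hp.continuous_seminorm 0) hy fun i i' =>
      hB.norm_coeff_le_of_eventually_eq hu1 (eventually_partialSum_sub_eq (hc i) (hc i')) k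
  choose a ha using fun k => cauchySeq_tendsto_of_complete (hc_cauchy k)
  refine ⟨a, (hp.tendsto_nhds _ x).2 fun j δ hδ => ?_⟩
  have hK := hB.one_le (hu1 0)
  have hpj := hp.continuous_seminorm j
  have hyx : Tendsto (fun i => p j (y i - x)) atTop (𝓝 0) := by
    simpa [Function.comp_def] using (hpj.tendsto (x - x)).comp (hy.sub_const x)
  obtain ⟨i, hi⟩ := (hyx.eventually (gt_mem_nhds (by positivity : 0 < δ / (K + 1)))).exists
  filter_upwards [hc i, eventually_gt_atTop j] with M hM hjM
  -- the bound for the finite combinations `y i' - y i` survives the limit `i' → ∞`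
  have h_tail : p j (partialSum u a M - y i) ≤ K * p j (y i - x) := by
    have := hB.seminorm_partialSum_le_of_tendsto hpj (b := fun i' => c i' - c i) (a := a - c i)
      (fun k => (ha k).sub_const _) (hy.sub_const (y i))
      (fun i' => eventually_partialSum_sub_eq (hc i') (hc i)) hjM
    rwa [partialSum_sub, hM, map_sub_rev (p j) x] at this
  calc p j (partialSum u a M - x)
      ≤ p j (partialSum u a M - y i) + p j (y i - x) := by
        simpa using map_add_le_add (p j) (partialSum u a M - y i) (y i - x)
    _ ≤ (K + 1) * p j (y i - x) := by linarith
    _ < δ := (lt_div_iff₀' (by linarith)).mp hi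

end HasBoundedPartialSums

end PartialSum

theorem basic_sequence_of_perturbation_inequalities_general {𝕜 X : Type*} [RCLike 𝕜]
    [AddCommGroup X] [Module 𝕜 X] [UniformSpace X] [IsUniformAddGroup X]
    [ContinuousSMul 𝕜 X] [T2Space X]
    (p : ℕ → Seminorm 𝕜 X) (hp : WithSeminorms p)
    (ε : ℕ → ℝ) (hε : ∀ n, 0 < ε n) (K : ℝ) (hK : HasProd (fun n => 1 + ε n) K)
    (u : ℕ → X) (hu1 : ∀ n, p 0 (u n) = 1)
    (hu : ∀ n, ∀ j ≤ n, ∀ a : ℕ → 𝕜,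
      p j (∑ k ∈ Finset.range (n + 1), a k • u k) ≤
        (1 + ε n) * p j (∑ k ∈ Finset.range (n + 2), a k • u k)) :
    IsBasicSequence 𝕜 u ∧
      (Submodule.span 𝕜 (Set.range u)).topologicalClosure ⊓ (p 0).kerSubmodule = ⊥ := by
  have hB : HasBoundedPartialSums p u K :=
    hasBoundedPartialSums_of_hasProd (fun n => le_add_of_nonneg_right (hε n).le) hK hu
  have hp0 := hp.continuous_seminorm 0
  have := hp.firstCountableTopology
  constructor
  · intro x hx
    obtain ⟨a, ha⟩ := hB.exists_tendsto_partialSum hu1 hp hx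
    refine ⟨a, ha, fun b hb => sub_eq_zero.mp ?_⟩
    have hba : Tendsto (partialSum u (b - a)) atTop (𝓝 (x - x)) :=
      (hb.sub ha).congr fun N => (partialSum_sub u b a N).symm
    exact hB.eq_zero_of_tendsto hu1 hp0 hba (by rw [sub_self, map_zero])
  · refine (Submodule.eq_bot_iff _).2 fun x ⟨hx, hx0⟩ => ?_
    obtain ⟨a, ha⟩ := hB.exists_tendsto_partialSum hu1 hp hx
    obtain rfl := hB.eq_zero_of_tendsto hu1 hp0 ha hx0
    exact tendsto_nhds_unique ha (tendsto_const_nhds.congr fun N => by simp [partialSum])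

/-- If `(u k)` satisfies `p 0 (u k) = 1` and the perturbation inequalities with constants
`1 + ε n` whose product is `K < ∞`, then `(u k)` is a basic sequence and the closed linear
span of `(u k)` intersects `ker (p 0)` trivially. (0-based indexing: `p 0` is `p₁`.) -/
theorem basic_sequence_of_perturbation_inequalities {𝕜 X : Type*} [RCLike 𝕜]
    [AddCommGroup X] [Module 𝕜 X] [UniformSpace X] [IsUniformAddGroup X]
    [ContinuousSMul 𝕜 X] [CompleteSpace X] [T2Space X]
    (p : ℕ → Seminorm 𝕜 X) (hp : WithSeminorms p) (hmono : ∀ n, p n ≤ p (n + 1))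
    (ε : ℕ → ℝ) (hε : ∀ n, 0 < ε n) (K : ℝ) (hK : HasProd (fun n => 1 + ε n) K)
    (u : ℕ → X) (hu1 : ∀ n, p 0 (u n) = 1)
    (hu : ∀ n, ∀ j ≤ n, ∀ a : ℕ → 𝕜,
      p j (∑ k ∈ Finset.range (n + 1), a k • u k) ≤
        (1 + ε n) * p j (∑ k ∈ Finset.range (n + 2), a k • u k)) :
    IsBasicSequence 𝕜 u ∧
      (Submodule.span 𝕜 (Set.range u)).topologicalClosure ⊓ (p 0).kerSubmodule = ⊥ :=
  basic_sequence_of_perturbation_inequalities_general p hp ε hε K hK u hu1 hu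
end

section
/- Let X be a Fréchet space, (p_n) increasing seminorms defining the topology, (ε_n) positive reals with ∏(1+ε_n) = K < ∞, and (u_k) a sequence satisfying p_1(u_k)=1 and the basic sequence inequalities with (ε_n). If (f_k) ⊂ X satisfies ∑_{k=1}^∞ 2K p_k(u_k − f_k) < 1, then (f_k) is a basic sequence equivalent to (u_k), and the closed linear span M_f of (f_k) satisfies M_f ∩ ker p_1 = {0}. -/
open Filter Topology

/-!
Two inequalities make a sequence basic: the coefficients are bounded by the partial sums
(`‖a k‖ ≤ K₀ p₀(∑_{i<n} a i • g i)` for `k < n`), and for each seminorm `p j` the partial sums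
are bounded by later ones. Given these, the coefficients of approximants from the span of `g`
converge, and the partial-sum bound passes to the limit, so the limiting coefficients represent
the limit point; the coefficient bound makes representations unique.

For `u`, telescoping the hypotheses gives the partial-sum bound with constant `K = ∏ (1 + ε n)`,
and since `a k • u k` is a difference of two partial sums and `p₀ (u k) = 1`, the coefficient
bound holds with constant `2K`. Both survive the perturbation: the error `∑ a k • (u k - f k)` is
at most `θ = ∑ 2K p_k (u k - f k) < 1` times `p₀` of the partial sum, so the constants for `f`
worsen only by a factor `1 / (1 - θ)`. The coefficient bound also makes the error series
absolutely summable as soon as either series converges, which gives the equivalence, and it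
forces the coefficients of a point of `ker p₀` to vanish.
-/

open Finset

section Bounds

variable {𝕜 X : Type*} [NormedField 𝕜] [AddCommGroup X] [Module 𝕜 X]

-- The coefficient functionals, resp. the partial-sum projections `P_m` with `m ≥ m₀`, of the
-- span of `g` are `q`-bounded.
def CoeffBounded (q : Seminorm 𝕜 X) (g : ℕ → X) (K : ℝ) : Prop :=
  ∀ (a : ℕ → 𝕜) (n k : ℕ), k < n → ‖a k‖ ≤ K * q (∑ i ∈ range n, a i • g i)

def PartialSumBounded (q : Seminorm 𝕜 X) (g : ℕ → X) (m₀ : ℕ) (C : ℝ) : Prop :=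
  ∀ (a : ℕ → 𝕜) (m n : ℕ), m₀ ≤ m → m ≤ n →
    q (∑ i ∈ range m, a i • g i) ≤ C * q (∑ i ∈ range n, a i • g i)

theorem Seminorm.map_sum_smul_le {ι : Type*} (q : Seminorm 𝕜 X) (s : Finset ι) (a : ι → 𝕜)
    (v : ι → X) : q (∑ k ∈ s, a k • v k) ≤ ∑ k ∈ s, ‖a k‖ * q (v k) :=
  (le_sum_of_subadditive q (map_zero q).le (map_add_le_add q) s _).trans_eq <| by
    simp only [map_smul_eq_mul]

theorem eventually_sum_range_smul_eq_linearCombination (g : ℕ → X) (c : ℕ →₀ 𝕜) :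
    ∀ᶠ N in atTop, ∑ k ∈ range N, c k • g k = Finsupp.linearCombination 𝕜 g c := by
  filter_upwards [eventually_gt_atTop (c.support.sup id)] with N hN
  refine (Finsupp.linearCombination_apply_of_mem_supported 𝕜 ?_).symm
  rw [Finsupp.mem_supported]
  intro k hk
  have : k ≤ c.support.sup id := le_sup (f := id) hk
  simp only [coe_range, Set.mem_Iio]
  omega

namespace CoeffBounded

variable {q : Seminorm 𝕜 X} {g : ℕ → X} {K : ℝ}

theorem pos (h : CoeffBounded q g K) : 0 < K := by
  have h1 := h (fun _ => 1) 1 0 one_pos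
  simp only [norm_one, range_one, sum_singleton, one_smul] at h1
  by_contra hK
  nlinarith [apply_nonneg q (g 0)]

theorem norm_apply_le (h : CoeffBounded q g K) (c : ℕ →₀ 𝕜) (k : ℕ) :
    ‖c k‖ ≤ K * q (Finsupp.linearCombination 𝕜 g c) := by
  obtain ⟨N, hkN, hN⟩ :=
    ((eventually_gt_atTop k).and (eventually_sum_range_smul_eq_linearCombination g c)).exists
  exact hN ▸ h c N k hkN

theorem seminorm_sum_smul_le (h : CoeffBounded q g K) {r : Seminorm 𝕜 X} {v : ℕ → X}
    {w : ℕ → ℝ} (hw : ∀ k, r (v k) ≤ w k) (hw_sum : Summable w) (a : ℕ → 𝕜) {m n : ℕ}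
    (hmn : m ≤ n) :
    r (∑ k ∈ range m, a k • v k) ≤ K * q (∑ i ∈ range n, a i • g i) * ∑' k, w k := by
  have hS : 0 ≤ K * q (∑ i ∈ range n, a i • g i) := mul_nonneg h.pos.le (apply_nonneg _ _)
  calc r (∑ k ∈ range m, a k • v k) ≤ ∑ k ∈ range m, ‖a k‖ * r (v k) := r.map_sum_smul_le _ _ _
    _ ≤ ∑ k ∈ range m, K * q (∑ i ∈ range n, a i • g i) * w k :=
        sum_le_sum fun k hk => mul_le_mul (h a n k (by rw [mem_range] at hk; omega)) (hw k)
          (apply_nonneg _ _) hS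
    _ = K * q (∑ i ∈ range n, a i • g i) * ∑ k ∈ range m, w k := (mul_sum _ _ _).symm
    _ ≤ K * q (∑ i ∈ range n, a i • g i) * ∑' k, w k :=
        mul_le_mul_of_nonneg_left
          (hw_sum.sum_le_tsum _ fun k _ => (apply_nonneg r (v k)).trans (hw k)) hS

theorem of_partialSumBounded (h1 : ∀ k, q (g k) = 1) {C : ℝ} (hC : 0 ≤ C)
    (h : PartialSumBounded q g 1 C) : CoeffBounded q g (2 * C) := by
  intro a n k hk
  have hS : ∀ m ≤ n, q (∑ i ∈ range m, a i • g i) ≤ C * q (∑ i ∈ range n, a i • g i) := by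
    intro m hm
    rcases m.eq_zero_or_pos with rfl | hm0
    · simpa using mul_nonneg hC (apply_nonneg _ _)
    · exact h a m n hm0 hm
  calc ‖a k‖ = q (∑ i ∈ range (k + 1), a i • g i - ∑ i ∈ range k, a i • g i) := by
        rw [sum_range_succ, add_sub_cancel_left, map_smul_eq_mul, h1, mul_one]
    _ ≤ q (∑ i ∈ range (k + 1), a i • g i) + q (∑ i ∈ range k, a i • g i) := map_sub_le_add _ _ _
    _ ≤ C * q (∑ i ∈ range n, a i • g i) + C * q (∑ i ∈ range n, a i • g i) :=
        add_le_add (hS _ hk) (hS _ hk.le)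
    _ = 2 * C * q (∑ i ∈ range n, a i • g i) := by ring

end CoeffBounded

theorem PartialSumBounded.le_of_finsupp {q : Seminorm 𝕜 X} {g : ℕ → X} {m₀ : ℕ} {C : ℝ}
    (h : PartialSumBounded q g m₀ C) (c : ℕ →₀ 𝕜) {m : ℕ} (hm : m₀ ≤ m) :
    q (∑ k ∈ range m, c k • g k) ≤ C * q (Finsupp.linearCombination 𝕜 g c) := by
  obtain ⟨N, hmN, hN⟩ :=
    ((eventually_ge_atTop m).and (eventually_sum_range_smul_eq_linearCombination g c)).exists
  exact hN ▸ h c m N hm hmN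

end Bounds

theorem WithSeminorms.summable_of_summable_seminorm {𝕜 X ι κ : Type*} [NormedField 𝕜]
    [AddCommGroup X] [Module 𝕜 X] [UniformSpace X] [IsUniformAddGroup X] [CompleteSpace X]
    {p : ι → Seminorm 𝕜 X} (hp : WithSeminorms p) {v : κ → X}
    (hv : ∀ j, Summable fun k => p j (v k)) : Summable v := by
  refine summable_iff_vanishing.2 fun e he => ?_
  obtain ⟨⟨s, r⟩, hr, hsub⟩ := hp.hasBasis_zero_ball.mem_iff.1 he
  have hsup : Summable fun k => s.sup p (v k) :=
    (summable_sum fun j _ => hv j).of_nonneg_of_le (fun _ => apply_nonneg _ _)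
      fun k => (Seminorm.finset_sup_le_sum p s (v k)).trans_eq (_root_.sum_apply _ _ _)
  obtain ⟨t, ht⟩ := hsup.vanishing (Iio_mem_nhds hr)
  refine ⟨t, fun t' ht' => hsub ?_⟩
  rw [Seminorm.mem_ball_zero]
  exact (le_sum_of_subadditive _ (map_zero _).le (map_add_le_add _) t' v).trans_lt (ht t' ht')

theorem Monotone.summable_seminorm_apply {𝕜 X : Type*} [NormedField 𝕜] [AddCommGroup X]
    [Module 𝕜 X] {p : ℕ → Seminorm 𝕜 X} (hmono : Monotone p) {v : ℕ → X}
    (hv : Summable fun k => p k (v k)) (j : ℕ) : Summable fun k => p j (v k) :=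
  (summable_nat_add_iff j).1 <| ((summable_nat_add_iff j).2 hv).of_nonneg_of_le
    (fun _ => apply_nonneg _ _) fun k => hmono (Nat.le_add_left j k) _

section Topological

variable {𝕜 X : Type*} [NormedField 𝕜] [AddCommGroup X] [Module 𝕜 X] [TopologicalSpace X]

namespace CoeffBounded

variable {q : Seminorm 𝕜 X} {g : ℕ → X} {K : ℝ}

theorem eq_zero_of_tendsto (h : CoeffBounded q g K) (hq : Continuous q) {a : ℕ → 𝕜} {x : X}
    (ha : Tendsto (fun N => ∑ k ∈ range N, a k • g k) atTop (𝓝 x)) (hx : q x = 0) : a = 0 := by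
  funext k
  have hlim := ((hq.tendsto x).comp ha).const_mul K
  rw [hx, mul_zero] at hlim
  exact norm_le_zero_iff.1 <| ge_of_tendsto hlim <|
    (eventually_gt_atTop k).mono fun N hN => h a N k hN

theorem exists_norm_le_of_tendsto (h : CoeffBounded q g K) (hq : Continuous q) {a : ℕ → 𝕜}
    {x : X} (ha : Tendsto (fun N => ∑ k ∈ range N, a k • g k) atTop (𝓝 x)) :
    ∃ B, ∀ k, ‖a k‖ ≤ B := by
  obtain ⟨B, hB⟩ := ((hq.tendsto x).comp ha).bddAbove_range
  exact ⟨K * B, fun k => (h a (k + 1) k k.lt_succ_self).trans <|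
    mul_le_mul_of_nonneg_left (hB ⟨k + 1, rfl⟩) h.pos.le⟩

theorem cauchySeq_apply [IsTopologicalAddGroup X] (h : CoeffBounded q g K) (hq : Continuous q)
    {c : ℕ → ℕ →₀ 𝕜} {x : X}
    (hc : Tendsto (fun i => Finsupp.linearCombination 𝕜 g (c i)) atTop (𝓝 x)) (k : ℕ) :
    CauchySeq fun i => c i k := by
  rw [cauchySeq_iff_tendsto_dist_atTop_0]
  have hdiff : Tendsto (fun ii : ℕ × ℕ => Finsupp.linearCombination 𝕜 g (c ii.1) -
      Finsupp.linearCombination 𝕜 g (c ii.2)) atTop (𝓝 (x - x)) := by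
    rw [← prod_atTop_atTop_eq]
    exact (hc.comp tendsto_fst).sub (hc.comp tendsto_snd)
  rw [sub_self] at hdiff
  have hbound := ((hq.tendsto 0).comp hdiff).const_mul K
  rw [map_zero, mul_zero] at hbound
  refine squeeze_zero (fun _ => dist_nonneg) (fun ii => ?_) hbound
  rw [dist_eq_norm, ← Finsupp.sub_apply, Function.comp_apply, ← map_sub]
  exact h.norm_apply_le _ k

end CoeffBounded

/-- Passing to the limit `i' → ∞` in the partial-sum bound for `c i' - c i`. -/
theorem PartialSumBounded.seminorm_sum_range_sub_le [IsTopologicalAddGroup X]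
    [ContinuousSMul 𝕜 X] {q : Seminorm 𝕜 X} {g : ℕ → X} {m₀ : ℕ} {C : ℝ}
    (h : PartialSumBounded q g m₀ C) (hq : Continuous q) {c : ℕ → ℕ →₀ 𝕜} {A : ℕ → 𝕜} {x : X}
    (hA : ∀ k, Tendsto (fun i => c i k) atTop (𝓝 (A k)))
    (hc : Tendsto (fun i => Finsupp.linearCombination 𝕜 g (c i)) atTop (𝓝 x)) {N i : ℕ}
    (hN : m₀ ≤ N) (hi : ∑ k ∈ range N, c i k • g k = Finsupp.linearCombination 𝕜 g (c i)) :
    q (∑ k ∈ range N, A k • g k - x) ≤ (C + 1) * q (x - Finsupp.linearCombination 𝕜 g (c i)) := by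
  have hlim : Tendsto (fun i' => q (∑ k ∈ range N, c i' k • g k - ∑ k ∈ range N, c i k • g k))
      atTop (𝓝 (q (∑ k ∈ range N, A k • g k - ∑ k ∈ range N, c i k • g k))) :=
    (hq.tendsto _).comp ((tendsto_finsetSum _ fun k _ => (hA k).smul_const (g k)).sub_const _)
  have hbound : ∀ i', q (∑ k ∈ range N, c i' k • g k - ∑ k ∈ range N, c i k • g k) ≤
      C * q (Finsupp.linearCombination 𝕜 g (c i') - Finsupp.linearCombination 𝕜 g (c i)) := by
    intro i'
    simpa [sub_smul, sum_sub_distrib] using h.le_of_finsupp (c i' - c i) hN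
  have hlim' :=
    ((hq.tendsto _).comp (hc.sub_const (Finsupp.linearCombination 𝕜 g (c i)))).const_mul C
  have hkey := le_of_tendsto_of_tendsto' hlim hlim' hbound
  rw [hi] at hkey
  calc q (∑ k ∈ range N, A k • g k - x)
      = q ((∑ k ∈ range N, A k • g k - Finsupp.linearCombination 𝕜 g (c i)) -
          (x - Finsupp.linearCombination 𝕜 g (c i))) := by rw [sub_sub_sub_cancel_right]
    _ ≤ q (∑ k ∈ range N, A k • g k - Finsupp.linearCombination 𝕜 g (c i)) +
          q (x - Finsupp.linearCombination 𝕜 g (c i)) := map_sub_le_add _ _ _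
    _ ≤ (C + 1) * q (x - Finsupp.linearCombination 𝕜 g (c i)) := by linarith

end Topological

section Criterion

variable {𝕜 X : Type*} [RCLike 𝕜] [AddCommGroup X] [Module 𝕜 X] [TopologicalSpace X]
  [IsTopologicalAddGroup X] [ContinuousSMul 𝕜 X] {p : ℕ → Seminorm 𝕜 X} {g : ℕ → X} {K : ℝ}

theorem exists_tendsto_sum_range_smul_of_tendsto (hp : WithSeminorms p)
    (hg : CoeffBounded (p 0) g K) (hps : ∀ j, ∃ m₀ C, PartialSumBounded (p j) g m₀ C)
    {c : ℕ → ℕ →₀ 𝕜} {x : X}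
    (hc : Tendsto (fun i => Finsupp.linearCombination 𝕜 g (c i)) atTop (𝓝 x)) :
    ∃ A : ℕ → 𝕜, Tendsto (fun N => ∑ k ∈ range N, A k • g k) atTop (𝓝 x) := by
  choose A hA using fun k =>
    cauchySeq_tendsto_of_complete (hg.cauchySeq_apply (hp.continuous_seminorm 0) hc k)
  refine ⟨A, (hp.tendsto_nhds _ x).2 fun j ε hε => ?_⟩
  obtain ⟨m₀, C, hC⟩ := hps j
  have hsmall : Tendsto (fun i => (C + 1) * p j (x - Finsupp.linearCombination 𝕜 g (c i))) atTop
      (𝓝 ((C + 1) * p j (x - x))) :=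
    (((hp.continuous_seminorm j).tendsto _).comp (hc.const_sub x)).const_mul _
  rw [sub_self, map_zero, mul_zero] at hsmall
  obtain ⟨i, hi⟩ := (hsmall.eventually (gt_mem_nhds hε)).exists
  filter_upwards [eventually_ge_atTop m₀,
    eventually_sum_range_smul_eq_linearCombination g (c i)] with N hN hNi
  exact (hC.seminorm_sum_range_sub_le (hp.continuous_seminorm j) hA hc hN hNi).trans_lt hi

theorem isBasicSequence_of_bounded (hp : WithSeminorms p) (hg : CoeffBounded (p 0) g K)
    (hps : ∀ j, ∃ m₀ C, PartialSumBounded (p j) g m₀ C) : IsBasicSequence 𝕜 g := by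
  have := hp.firstCountableTopology
  intro x hx
  obtain ⟨y, hy_mem, hy⟩ := mem_closure_iff_seq_limit.1 hx
  choose c hc using fun i => (Finsupp.range_linearCombination 𝕜 (v := g) ▸ hy_mem i :
    y i ∈ LinearMap.range (Finsupp.linearCombination 𝕜 g))
  obtain ⟨A, hA⟩ := exists_tendsto_sum_range_smul_of_tendsto hp hg hps (c := c) (by simpa [hc])
  refine ⟨A, hA, fun A' hA' => sub_eq_zero.1 <|
    hg.eq_zero_of_tendsto (hp.continuous_seminorm 0) ?_ (map_zero _)⟩
  simpa [sub_smul, sum_sub_distrib] using hA'.sub hA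

theorem IsBasicSequence.topologicalClosure_inf_kerSubmodule_eq_bot [T2Space X]
    (hb : IsBasicSequence 𝕜 g) {q : Seminorm 𝕜 X} (hg : CoeffBounded q g K) (hq : Continuous q) :
    (Submodule.span 𝕜 (Set.range g)).topologicalClosure ⊓ q.kerSubmodule = ⊥ := by
  refine eq_bot_iff.2 fun x ⟨hx, hx0⟩ => ?_
  obtain ⟨a, ha, -⟩ := hb x hx
  obtain rfl := hg.eq_zero_of_tendsto hq ha hx0
  simp only [Pi.zero_apply, zero_smul, sum_const_zero] at ha
  exact (Submodule.mem_bot 𝕜).2 (tendsto_nhds_unique ha tendsto_const_nhds)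

end Criterion

section Perturbation

variable {𝕜 X : Type*} [NormedField 𝕜] [AddCommGroup X] [Module 𝕜 X] {p : ℕ → Seminorm 𝕜 X}
  {g f : ℕ → X} {K : ℝ}

theorem sum_range_smul_sub (a : ℕ → 𝕜) (n : ℕ) :
    ∑ k ∈ range n, a k • (g k - f k) = ∑ k ∈ range n, a k • g k - ∑ k ∈ range n, a k • f k := by
  simp only [smul_sub, sum_sub_distrib]

namespace CoeffBounded

theorem one_sub_mul_le (hmono : Monotone p) (hg : CoeffBounded (p 0) g K)
    (hv : Summable fun k => p k (g k - f k)) (a : ℕ → 𝕜) (n : ℕ) :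
    (1 - K * ∑' k, p k (g k - f k)) * p 0 (∑ k ∈ range n, a k • g k) ≤
      p 0 (∑ k ∈ range n, a k • f k) := by
  have hdiff := hg.seminorm_sum_smul_le (fun k => hmono (Nat.zero_le k) _) hv a (le_refl n)
  have htri : p 0 (∑ k ∈ range n, a k • g k) ≤
      p 0 (∑ k ∈ range n, a k • f k) + p 0 (∑ k ∈ range n, a k • (g k - f k)) :=
    calc _ = p 0 (∑ k ∈ range n, a k • f k + ∑ k ∈ range n, a k • (g k - f k)) := by
          rw [sum_range_smul_sub, add_sub_cancel]
      _ ≤ _ := map_add_le_add _ _ _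
  linarith

theorem of_perturbation (hmono : Monotone p) (hg : CoeffBounded (p 0) g K)
    (hv : Summable fun k => p k (g k - f k)) (hθ : K * ∑' k, p k (g k - f k) < 1) :
    CoeffBounded (p 0) f (K / (1 - K * ∑' k, p k (g k - f k))) := by
  intro a n k hk
  have hS := hg.one_sub_mul_le hmono hv a n
  rw [← le_div_iff₀' (sub_pos.2 hθ)] at hS
  calc ‖a k‖ ≤ K * p 0 (∑ i ∈ range n, a i • g i) := hg a n k hk
    _ ≤ K * (p 0 (∑ i ∈ range n, a i • f i) / (1 - K * ∑' k, p k (g k - f k))) :=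
        mul_le_mul_of_nonneg_left hS hg.pos.le
    _ = _ := by ring

end CoeffBounded

theorem PartialSumBounded.of_perturbation (hmono : Monotone p) {K' C : ℝ} {j m₀ : ℕ}
    (hf : CoeffBounded (p 0) f K') (hg : PartialSumBounded (p j) g m₀ C) (hC : 0 ≤ C)
    (hv : Summable fun k => p j (g k - f k)) :
    PartialSumBounded (p j) f m₀
      (C * (1 + K' * ∑' k, p j (g k - f k)) + K' * ∑' k, p j (g k - f k)) := by
  intro a m n hm hmn
  set δ := ∑' k, p j (g k - f k)
  set Sf := ∑ i ∈ range n, a i • f i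
  have hD : ∀ m ≤ n, p j (∑ k ∈ range m, a k • (g k - f k)) ≤ K' * δ * p j Sf := by
    intro m hm
    calc p j (∑ k ∈ range m, a k • (g k - f k)) ≤ K' * p 0 Sf * δ :=
          hf.seminorm_sum_smul_le (fun _ => le_rfl) hv a hm
      _ = K' * δ * p 0 Sf := by ring
      _ ≤ K' * δ * p j Sf := mul_le_mul_of_nonneg_left (hmono (Nat.zero_le j) _)
          (mul_nonneg hf.pos.le (tsum_nonneg fun _ => apply_nonneg _ _))
  have hSg : ∑ i ∈ range n, a i • g i = Sf + ∑ k ∈ range n, a k • (g k - f k) := by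
    rw [sum_range_smul_sub, add_sub_cancel]
  calc p j (∑ i ∈ range m, a i • f i)
      = p j (∑ i ∈ range m, a i • g i - ∑ k ∈ range m, a k • (g k - f k)) := by
        rw [sum_range_smul_sub, sub_sub_cancel]
    _ ≤ p j (∑ i ∈ range m, a i • g i) + p j (∑ k ∈ range m, a k • (g k - f k)) :=
        map_sub_le_add _ _ _
    _ ≤ C * (p j Sf + K' * δ * p j Sf) + K' * δ * p j Sf := by
        gcongr
        · refine (hg a m n hm hmn).trans (mul_le_mul_of_nonneg_left ?_ hC)
          rw [hSg]
          exact (map_add_le_add _ _ _).trans (add_le_add le_rfl (hD n le_rfl))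
        · exact hD m hmn
    _ = (C * (1 + K' * δ) + K' * δ) * p j Sf := by ring

end Perturbation

theorem CoeffBounded.exists_tendsto_of_exists_tendsto {𝕜 X : Type*} [NormedField 𝕜]
    [AddCommGroup X] [Module 𝕜 X] [UniformSpace X] [IsUniformAddGroup X] [CompleteSpace X]
    {p : ℕ → Seminorm 𝕜 X} {g f : ℕ → X} {K : ℝ} (hp : WithSeminorms p)
    (hg : CoeffBounded (p 0) g K) (hd : ∀ j, Summable fun k => p j (g k - f k)) {a : ℕ → 𝕜}
    (h : ∃ x, Tendsto (fun N => ∑ k ∈ range N, a k • g k) atTop (𝓝 x)) :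
    ∃ y, Tendsto (fun N => ∑ k ∈ range N, a k • f k) atTop (𝓝 y) := by
  obtain ⟨x, hx⟩ := h
  obtain ⟨B, hB⟩ := hg.exists_norm_le_of_tendsto (hp.continuous_seminorm 0) hx
  have hs : Summable fun k => a k • (g k - f k) :=
    hp.summable_of_summable_seminorm fun j => ((hd j).mul_left B).of_nonneg_of_le
      (fun _ => apply_nonneg _ _) fun k => by
        rw [map_smul_eq_mul]
        exact mul_le_mul_of_nonneg_right (hB k) (apply_nonneg _ _)
  refine ⟨x - ∑' k, a k • (g k - f k), (hx.sub hs.hasSum.tendsto_sum_nat).congr fun N => ?_⟩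
  rw [sum_range_smul_sub, sub_sub_cancel]

theorem prod_le_of_hasProd_of_one_le {ι : Type*} {f : ι → ℝ} {a : ℝ} (hf : ∀ i, 1 ≤ f i)
    (h : HasProd f a) (s : Finset ι) : ∏ i ∈ s, f i ≤ a :=
  ge_of_tendsto h <| eventually_atTop.2 ⟨s, fun _ hst =>
    prod_le_prod_of_subset_of_one_le hst (fun i _ => zero_le_one.trans (hf i)) fun i _ _ => hf i⟩

theorem le_prod_mul_of_le_mul_succ {F c : ℕ → ℝ} {m : ℕ} (hc : ∀ n, 0 ≤ c n)
    (hF : ∀ n, m ≤ n → F n ≤ c n * F (n + 1)) (d : ℕ) :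
    F m ≤ (∏ i ∈ Ico m (m + d), c i) * F (m + d) := by
  induction d with
  | zero => simp
  | succ d ih =>
    calc F m ≤ (∏ i ∈ Ico m (m + d), c i) * F (m + d) := ih
      _ ≤ (∏ i ∈ Ico m (m + d), c i) * (c (m + d) * F (m + d + 1)) :=
          mul_le_mul_of_nonneg_left (hF _ (Nat.le_add_right m d)) (prod_nonneg fun i _ => hc i)
      _ = (∏ i ∈ Ico m (m + (d + 1)), c i) * F (m + (d + 1)) := by
          rw [← add_assoc, prod_Ico_succ_top (Nat.le_add_right m d)]
          ring

theorem partialSumBounded_of_hasProd {𝕜 X : Type*} [NormedField 𝕜] [AddCommGroup X]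
    [Module 𝕜 X] {q : Seminorm 𝕜 X} {g : ℕ → X} {ε : ℕ → ℝ} {K : ℝ} (hε : ∀ n, 0 ≤ ε n)
    (hK : HasProd (fun n => 1 + ε n) K) {j : ℕ}
    (h : ∀ n, j ≤ n → ∀ a : ℕ → 𝕜, q (∑ k ∈ range (n + 1), a k • g k) ≤
      (1 + ε n) * q (∑ k ∈ range (n + 2), a k • g k)) :
    PartialSumBounded q g (j + 1) K := by
  intro a m n hm hmn
  obtain ⟨m, rfl⟩ : ∃ m', m = m' + 1 := ⟨m - 1, by omega⟩
  obtain ⟨d, rfl⟩ := Nat.exists_eq_add_of_le hmn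
  have hchain := le_prod_mul_of_le_mul_succ (m := m)
    (F := fun n => q (∑ k ∈ range (n + 1), a k • g k)) (fun n => by linarith [hε n])
    (fun n hn => h n (by omega) a) d
  rw [add_right_comm] at hchain
  exact hchain.trans <| mul_le_mul_of_nonneg_right
    (prod_le_of_hasProd_of_one_le (fun n => by linarith [hε n]) hK _) (apply_nonneg _ _)

/-- Stability of basic sequences under small perturbations: if `(u k)` satisfies the
basic-sequence inequalities and `∑ 2 K * p k (u k - f k) < 1`, then `(f k)` is a basic
sequence equivalent to `(u k)`, and its closed linear span meets `ker (p 0)` trivially. -/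
theorem basic_sequence_perturbation {𝕜 X : Type*} [RCLike 𝕜]
    [AddCommGroup X] [Module 𝕜 X] [UniformSpace X] [IsUniformAddGroup X]
    [ContinuousSMul 𝕜 X] [CompleteSpace X] [T2Space X]
    (p : ℕ → Seminorm 𝕜 X) (hp : WithSeminorms p) (hmono : ∀ n, p n ≤ p (n + 1))
    (ε : ℕ → ℝ) (hε : ∀ n, 0 < ε n) (K : ℝ) (hK : HasProd (fun n => 1 + ε n) K)
    (u : ℕ → X) (hu1 : ∀ n, p 0 (u n) = 1)
    (hu : ∀ n, ∀ j ≤ n, ∀ a : ℕ → 𝕜,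
      p j (∑ k ∈ Finset.range (n + 1), a k • u k) ≤
        (1 + ε n) * p j (∑ k ∈ Finset.range (n + 2), a k • u k))
    (f : ℕ → X) (hfsum : Summable fun k => 2 * K * p k (u k - f k))
    (hf : ∑' k, 2 * K * p k (u k - f k) < 1) :
    IsBasicSequence 𝕜 f ∧
      (∀ a : ℕ → 𝕜,
        (∃ x : X, Filter.Tendsto (fun N => ∑ k ∈ Finset.range N, a k • u k)
            Filter.atTop (nhds x)) ↔
        (∃ y : X, Filter.Tendsto (fun N => ∑ k ∈ Finset.range N, a k • f k)
            Filter.atTop (nhds y))) ∧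
      (Submodule.span 𝕜 (Set.range f)).topologicalClosure ⊓ (p 0).kerSubmodule = ⊥ := by
  have hp_mono : Monotone p := monotone_nat_of_le_succ hmono
  have hK1 : 1 ≤ K := by
    simpa using prod_le_of_hasProd_of_one_le (fun n => by linarith [hε n]) hK ∅
  have hu_ps : ∀ j, PartialSumBounded (p j) u (j + 1) K := fun j =>
    partialSumBounded_of_hasProd (fun n => (hε n).le) hK fun n hn a => hu n j hn a
  have hu_cb : CoeffBounded (p 0) u (2 * K) :=
    .of_partialSumBounded hu1 (by linarith) (hu_ps 0)
  have hv : Summable fun k => p k (u k - f k) := (summable_mul_left_iff (by positivity)).1 hfsum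
  have hθ : 2 * K * ∑' k, p k (u k - f k) < 1 := by rwa [← tsum_mul_left]
  have hd := hp_mono.summable_seminorm_apply hv
  have hf_cb := hu_cb.of_perturbation hp_mono hv hθ
  have hbasic : IsBasicSequence 𝕜 f := isBasicSequence_of_bounded hp hf_cb fun j =>
    ⟨j + 1, _, (hu_ps j).of_perturbation hp_mono hf_cb (by linarith) (hd j)⟩
  refine ⟨hbasic, fun a => ⟨hu_cb.exists_tendsto_of_exists_tendsto hp hd,
    hf_cb.exists_tendsto_of_exists_tendsto hp fun j => ?_⟩,
    hbasic.topologicalClosure_inf_kerSubmodule_eq_bot hf_cb (hp.continuous_seminorm 0)⟩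
  simpa only [map_sub_rev] using hd j
end

section
/- Let X be a Fréchet space, p a continuous seminorm on X, and M a closed infinite-dimensional subspace of X. The following are equivalent: (1) for every closed subspace E of finite codimension in X, E ∩ M ⊄ ker p; (2) M ∩ ker p has infinite codimension in M. -/
/-!
If `M / (M ∩ ker p)` is finite-dimensional, then `M ⊆ ker p + W` for a finite-dimensional `W`
meeting `ker p` trivially. On `W` the seminorm `p` is a norm, so every coordinate functional of
`W` is bounded by a multiple of `p`; Hahn–Banach extends it to `X` with the same bound, which
makes the extension continuous and zero on `ker p`. The common kernel `E` of these extensions is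
closed, of finite codimension, contains `ker p` and meets `W` trivially, so the modular law gives
`E ∩ M ⊆ ker p`. Conversely, if `E ∩ M ⊆ ker p` then `M / (M ∩ ker p)` is a quotient of
`M / (E ∩ M)`, which embeds into the finite-dimensional `X / E`.
-/

open Filter Topology

open scoped NNReal

namespace Submodule

theorem finite_quotient_comap_subtype_of_inf_le {R V : Type*} [Ring R] [IsNoetherianRing R]
    [AddCommGroup V] [Module R V] {E M N : Submodule R V} [Module.Finite R (V ⧸ E)]
    (h : E ⊓ M ≤ N) : Module.Finite R (M ⧸ N.comap M.subtype) := by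
  have hinj : Function.Injective ((E.comap M.subtype).mapQ E M.subtype le_rfl) := by
    rw [← LinearMap.ker_eq_bot, ker_mapQ, mkQ_map_self]
  have := Module.Finite.of_injective _ hinj
  exact Module.Finite.of_surjective _ (factor_surjective (p := E.comap M.subtype)
    fun m hm => h ⟨hm, m.2⟩)

theorem exists_finiteDimensional_disjoint_le_sup {K V : Type*} [DivisionRing K]
    [AddCommGroup V] [Module K V] (M N : Submodule K V)
    [Module.Finite K (M ⧸ N.comap M.subtype)] :
    ∃ W : Submodule K V, FiniteDimensional K W ∧ Disjoint W N ∧ M ≤ N ⊔ W := by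
  obtain ⟨W', hW'⟩ := (N.comap M.subtype).exists_isCompl
  have : FiniteDimensional K W' := (quotientEquivOfIsCompl _ W' hW').finiteDimensional
  refine ⟨W'.map M.subtype, inferInstance, ?_, ?_⟩
  · rw [disjoint_def]
    rintro _ ⟨m, hmW', rfl⟩ hmN
    simpa using disjoint_def.1 hW'.disjoint m hmN hmW'
  · calc M = (N.comap M.subtype ⊔ W').map M.subtype := by
          rw [hW'.sup_eq_top, map_subtype_top]
      _ ≤ N ⊔ W'.map M.subtype := by
          rw [map_sup, map_comap_subtype]
          exact sup_le_sup_right inf_le_right _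

end Submodule

namespace Seminorm

theorem exists_norm_dual_le_smul_of_finiteDimensional {𝕜 V : Type*}
    [NontriviallyNormedField 𝕜] [CompleteSpace 𝕜] [AddCommGroup V] [Module 𝕜 V]
    [FiniteDimensional 𝕜 V] (q : Seminorm 𝕜 V) (hq : ∀ v, q v = 0 → v = 0)
    (ℓ : Module.Dual 𝕜 V) : ∃ C : ℝ≥0, ∀ v, ‖ℓ v‖ ≤ (C • q) v := by
  -- `q` is a norm on `V`, for which every linear functional is continuous.
  let : NormedAddCommGroup V := AddGroupNorm.toNormedAddCommGroup
    { q.toAddGroupSeminorm with eq_zero_of_map_eq_zero' := hq }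
  let : NormedSpace 𝕜 V := ⟨fun c v => (map_smul_eq_mul q c v).le⟩
  let L := LinearMap.toContinuousLinearMap ℓ
  exact ⟨‖L‖₊, L.le_opNorm⟩

theorem exists_extension_dual_le_smul {𝕜 V : Type*} [RCLike 𝕜] [AddCommGroup V]
    [Module 𝕜 V] (p : Seminorm 𝕜 V) {W : Submodule 𝕜 V} [FiniteDimensional 𝕜 W]
    (hW : Disjoint W p.kerSubmodule) (ℓ : Module.Dual 𝕜 W) :
    ∃ f : Module.Dual 𝕜 V, (∀ w : W, f w = ℓ w) ∧
      ∃ C : ℝ≥0, ∀ v, ‖f v‖ ≤ (C • p) v := by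
  obtain ⟨C, hC⟩ := (p.comp W.subtype).exists_norm_dual_le_smul_of_finiteDimensional
    (fun w hw => by simpa using Submodule.disjoint_def.1 hW w w.2 hw) ℓ
  obtain ⟨f, hfℓ, hf⟩ := Module.Dual.exists_extension_of_le_seminorm W ℓ (p := C • p) hC
  exact ⟨f, hfℓ, C, hf⟩

theorem continuous_of_norm_le {𝕜 X : Type*} [NormedField 𝕜] [AddCommGroup X] [Module 𝕜 X]
    [TopologicalSpace X] [IsTopologicalAddGroup X] {p : Seminorm 𝕜 X} (hp : Continuous p)
    (f : X →ₗ[𝕜] 𝕜) (hf : ∀ x, ‖f x‖ ≤ p x) : Continuous f :=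
  continuous_of_continuousAt_zero f.toAddMonoidHom <| by
    simpa [ContinuousAt] using squeeze_zero_norm hf (by simpa using hp.tendsto 0)

theorem exists_isClosed_finite_quotient_of_disjoint_kerSubmodule {𝕜 X : Type*} [RCLike 𝕜]
    [AddCommGroup X] [Module 𝕜 X] [TopologicalSpace X] [IsTopologicalAddGroup X]
    {p : Seminorm 𝕜 X} (hp : Continuous p) {W : Submodule 𝕜 X} [FiniteDimensional 𝕜 W]
    (hW : Disjoint W p.kerSubmodule) :
    ∃ E : Submodule 𝕜 X, IsClosed (E : Set X) ∧ Module.Finite 𝕜 (X ⧸ E) ∧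
      p.kerSubmodule ≤ E ∧ Disjoint W E := by
  let b := Module.finBasis 𝕜 W
  choose f hfb C hC using fun i => p.exists_extension_dual_le_smul hW (b.coord i)
  let Φ : X →ₗ[𝕜] Fin (Module.finrank 𝕜 W) → 𝕜 := LinearMap.pi f
  have hΦ : Continuous Φ := continuous_pi fun i =>
    continuous_of_norm_le (hp.const_smul (C i)) (f i) (hC i)
  refine ⟨LinearMap.ker Φ, isClosed_singleton.preimage hΦ,
    Φ.quotKerEquivRange.symm.finiteDimensional, fun x hx => ?_, ?_⟩
  · funext i
    simpa [Φ, (show p x = 0 from hx)] using hC i x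
  · rw [Submodule.disjoint_def]
    intro w hw hwΦ
    have hcoord : ∀ i, b.coord i ⟨w, hw⟩ = 0 := fun i => by
      rw [← hfb i]
      exact congr_fun hwΦ i
    simpa using b.forall_coord_eq_zero_iff.1 hcoord

end Seminorm

theorem finite_codim_ker_characterization_general {𝕜 X : Type*} [RCLike 𝕜]
    [AddCommGroup X] [Module 𝕜 X] [UniformSpace X] [IsUniformAddGroup X]
    (p : Seminorm 𝕜 X) (hp : Continuous p)
    (M : Submodule 𝕜 X) :
    (∀ E : Submodule 𝕜 X, IsClosed (E : Set X) → Module.Finite 𝕜 (X ⧸ E) →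
        ¬ (E ⊓ M ≤ p.kerSubmodule)) ↔
      ¬ Module.Finite 𝕜 (↥M ⧸ Submodule.comap M.subtype p.kerSubmodule) := by
  refine ⟨fun h _ => ?_, fun h E _ _ hle =>
    h (Submodule.finite_quotient_comap_subtype_of_inf_le hle)⟩
  obtain ⟨W, _, hWker, hMW⟩ := M.exists_finiteDimensional_disjoint_le_sup p.kerSubmodule
  obtain ⟨E, hEc, hEfin, hkerE, hWE⟩ :=
    Seminorm.exists_isClosed_finite_quotient_of_disjoint_kerSubmodule hp hWker
  refine h E hEc hEfin ?_
  calc E ⊓ M ≤ (p.kerSubmodule ⊔ W) ⊓ E := inf_comm E M ▸ inf_le_inf_right E hMW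
    _ = p.kerSubmodule ⊔ W ⊓ E := sup_inf_assoc_of_le W hkerE
    _ = p.kerSubmodule := by rw [hWE.eq_bot, sup_bot_eq]

/-- For a closed infinite-dimensional subspace `M` of a Fréchet space and a continuous
seminorm `p`: `E ⊓ M ⊄ ker p` for every closed finite-codimensional subspace `E` iff
`M ⊓ ker p` has infinite codimension in `M`. -/
theorem finite_codim_ker_characterization {𝕜 X : Type*} [RCLike 𝕜]
    [AddCommGroup X] [Module 𝕜 X] [UniformSpace X] [IsUniformAddGroup X]
    [ContinuousSMul 𝕜 X] [CompleteSpace X] [T2Space X]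
    (pfam : ℕ → Seminorm 𝕜 X) (hpfam : WithSeminorms pfam)
    (p : Seminorm 𝕜 X) (hp : Continuous p)
    (M : Submodule 𝕜 X) (hMc : IsClosed (M : Set X)) (hMinf : ¬ Module.Finite 𝕜 M) :
    (∀ E : Submodule 𝕜 X, IsClosed (E : Set X) → Module.Finite 𝕜 (X ⧸ E) →
        ¬ (E ⊓ M ≤ p.kerSubmodule)) ↔
      ¬ Module.Finite 𝕜 (↥M ⧸ Submodule.comap M.subtype p.kerSubmodule) :=
  finite_codim_ker_characterization_general p hp M
end

section
/- Under the hypotheses u_n ∈ ker p_n \ ker p_{n+1} for all n, the sequence (u_n) is basic: the coefficients in the representation x = ∑_{n=1}^∞ α_n u_n are unique, and coefficient functionals are continuous in the sense that if x_k = ∑_n α_{n,k} u_n converges to x in X, then each (α_{n,k})_k converges to some α_n and x = ∑_n α_n u_n. -/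
open Filter Topology Finset

namespace Seminorm

variable {𝕜 X ι : Type*} [SeminormedRing 𝕜] [AddCommGroup X] [Module 𝕜 X]
  (q : Seminorm 𝕜 X)

lemma eq_of_map_sub_eq_zero {x y : X} (h : q (x - y) = 0) : q x = q y :=
  sub_eq_zero.1 <| abs_nonpos_iff.1 <| h ▸ abs_sub_map_le_sub q x y

lemma map_sum_smul_le_s8 (s : Finset ι) (c : ι → 𝕜) (u : ι → X) :
    q (∑ i ∈ s, c i • u i) ≤ ∑ i ∈ s, ‖c i‖ * q (u i) :=
  (le_sum_of_subadditive q (map_zero q).le (map_add_le_add q) s _).trans_eq <|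
    sum_congr rfl fun i _ => map_smul_eq_mul q (c i) (u i)

lemma norm_mul_map_le_of_map_sub_sum_eq_zero {c : ℕ → 𝕜} {u : ℕ → X} {y : X} (n : ℕ)
    (h : q (y - ∑ j ∈ range (n + 1), c j • u j) = 0) :
    ‖c n‖ * q (u n) ≤ q y + ∑ j ∈ range n, ‖c j‖ * q (u j) :=
  calc ‖c n‖ * q (u n)
    _ = q (∑ j ∈ range (n + 1), c j • u j - ∑ j ∈ range n, c j • u j) := by
      rw [sum_range_succ, add_sub_cancel_left, map_smul_eq_mul]
    _ ≤ q (∑ j ∈ range (n + 1), c j • u j) + q (∑ j ∈ range n, c j • u j) :=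
      map_sub_le_add q _ _
    _ ≤ q y + ∑ j ∈ range n, ‖c j‖ * q (u j) := by
      rw [← q.eq_of_map_sub_eq_zero h]
      gcongr
      exact q.map_sum_smul_le_s8 _ _ _

end Seminorm

section KernelExpansion

variable {𝕜 X : Type*} [NormedField 𝕜] [AddCommGroup X] [Module 𝕜 X]
  {p : ℕ → Seminorm 𝕜 X} {u : ℕ → X}

lemma Seminorm.mem_kerSubmodule {q : Seminorm 𝕜 X} {x : X} :
    x ∈ q.kerSubmodule ↔ q x = 0 :=
  Iff.rfl

def IsKernelExpansion (p : ℕ → Seminorm 𝕜 X) (u : ℕ → X) (c : ℕ → 𝕜) (y : X) : Prop :=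
  ∀ m, y - ∑ n ∈ range m, c n • u n ∈ (p m).kerSubmodule

lemma IsKernelExpansion.sub {c d : ℕ → 𝕜} {y z : X} (hc : IsKernelExpansion p u c y)
    (hd : IsKernelExpansion p u d z) : IsKernelExpansion p u (c - d) (y - z) := fun m => by
  convert sub_mem (hc m) (hd m) using 1
  simp only [Pi.sub_apply, sub_smul, sum_sub_distrib]
  abel

lemma exists_norm_coeff_le (hmono : Monotone p) (hnker : ∀ n, p (n + 1) (u n) ≠ 0)
    (n : ℕ) :
    ∃ K, 0 ≤ K ∧ ∀ c y, IsKernelExpansion p u c y → ∀ j < n, ‖c j‖ ≤ K * p n y := by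
  induction n with
  | zero => exact ⟨0, le_rfl, fun _ _ _ j hj => absurd hj j.not_lt_zero⟩
  | succ n ih =>
    obtain ⟨K, hK0, hK⟩ := ih
    set q := p (n + 1)
    have hq : 0 < q (u n) := (apply_nonneg _ _).lt_of_ne' (hnker n)
    refine ⟨max K ((1 + K * ∑ j ∈ range n, q (u j)) / q (u n)), le_max_of_le_left hK0,
      fun c y hc j hj => ?_⟩
    have hprev : ∀ j < n, ‖c j‖ ≤ K * q y := fun j hj =>
      (hK c y hc j hj).trans (by gcongr; exact hmono n.le_succ y)
    obtain hj | rfl := Nat.lt_succ_iff_lt_or_eq.1 hj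
    · exact (hprev j hj).trans (by gcongr; exact le_max_left _ _)
    · refine le_trans ?_ (mul_le_mul_of_nonneg_right (le_max_right _ _) (apply_nonneg _ _))
      rw [div_mul_eq_mul_div, le_div_iff₀ hq]
      calc ‖c j‖ * q (u j) ≤ q y + ∑ i ∈ range j, ‖c i‖ * q (u i) :=
            q.norm_mul_map_le_of_map_sub_sum_eq_zero j (hc (j + 1))
        _ ≤ q y + ∑ i ∈ range j, K * q y * q (u i) := by
            gcongr with i hi
            exact hprev i (mem_range.1 hi)
        _ = (1 + K * ∑ i ∈ range j, q (u i)) * q y := by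
            rw [← mul_sum]
            ring

lemma IsKernelExpansion.unique (hmono : Monotone p) (hnker : ∀ n, p (n + 1) (u n) ≠ 0)
    {a b : ℕ → 𝕜} {x : X} (ha : IsKernelExpansion p u a x) (hb : IsKernelExpansion p u b x) :
    a = b := by
  funext n
  obtain ⟨K, -, hK⟩ := exists_norm_coeff_le hmono hnker (n + 1)
  have hle := hK _ _ (ha.sub hb) n n.lt_succ_self
  rwa [sub_self, map_zero, mul_zero, Pi.sub_apply, norm_le_zero_iff, sub_eq_zero] at hle

lemma map_sub_partialSum_eq (hu : ∀ m n, m ≤ n → u n ∈ (p m).kerSubmodule)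
    (c : ℕ → 𝕜) (y : X) {m N : ℕ} (hmN : m ≤ N) :
    p m (y - ∑ n ∈ range N, c n • u n) = p m (y - ∑ n ∈ range m, c n • u n) := by
  refine (p m).eq_of_map_sub_eq_zero ?_
  rw [← sum_range_add_sum_Ico _ hmN, sub_sub_sub_cancel_left, sub_add_cancel_left]
  exact neg_mem <| sum_mem fun n hn => Submodule.smul_mem _ _ (hu m n (mem_Ico.1 hn).1)

variable [TopologicalSpace X]

lemma tendsto_partialSum_iff (hp : WithSeminorms p)
    (hu : ∀ m n, m ≤ n → u n ∈ (p m).kerSubmodule) {c : ℕ → 𝕜} {y : X} :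
    Tendsto (fun N => ∑ n ∈ range N, c n • u n) atTop (𝓝 y) ↔ IsKernelExpansion p u c y := by
  rw [hp.tendsto_nhds]
  refine ⟨fun h m => ?_, fun h m ε hε => ?_⟩
  · refine Seminorm.mem_kerSubmodule.2 <|
      le_antisymm (le_of_forall_pos_lt_add fun ε hε => ?_) (apply_nonneg _ _)
    obtain ⟨N, hlt, hmN⟩ := ((h m ε hε).and (eventually_ge_atTop m)).exists
    rwa [zero_add, ← map_sub_partialSum_eq hu c y hmN, map_sub_rev]
  · filter_upwards [eventually_ge_atTop m] with N hmN
    rwa [map_sub_rev, map_sub_partialSum_eq hu c y hmN, Seminorm.mem_kerSubmodule.1 (h m)]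

lemma cauchySeq_coeff (hp : WithSeminorms p) (hmono : Monotone p)
    (hnker : ∀ n, p (n + 1) (u n) ≠ 0) {A : ℕ → ℕ → 𝕜} {xs : ℕ → X} {x : X}
    (hA : ∀ k, IsKernelExpansion p u (A k) (xs k)) (hx : Tendsto xs atTop (𝓝 x)) (n : ℕ) :
    CauchySeq fun k => A k n := by
  have := hp.topologicalAddGroup
  obtain ⟨K, hK0, hK⟩ := exists_norm_coeff_le hmono hnker (n + 1)
  have hpx : Tendsto (fun k => p (n + 1) (xs k - x)) atTop (𝓝 0) :=
    ((hp.continuous_seminorm _).tendsto' 0 0 (map_zero _)).comp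
      (tendsto_sub_nhds_zero_iff.2 hx)
  rw [cauchySeq_iff_tendsto_dist_atTop_0, ← prod_atTop_atTop_eq]
  refine squeeze_zero (fun _ => dist_nonneg) (fun kl => ?_)
    (by simpa using ((hpx.comp tendsto_fst).add (hpx.comp tendsto_snd)).const_mul K)
  calc dist (A kl.1 n) (A kl.2 n) ≤ K * p (n + 1) (xs kl.1 - xs kl.2) := by
        simpa [dist_eq_norm] using hK _ _ ((hA kl.1).sub (hA kl.2)) n n.lt_succ_self
    _ ≤ K * (p (n + 1) (xs kl.1 - x) + p (n + 1) (xs kl.2 - x)) := by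
        refine mul_le_mul_of_nonneg_left ?_ hK0
        simpa only [sub_sub_sub_cancel_right, map_sub_rev (p (n + 1)) x] using
          map_sub_le_add (p (n + 1)) (xs kl.1 - x) (xs kl.2 - x)

lemma IsKernelExpansion.of_tendsto (hp : WithSeminorms p) {A : ℕ → ℕ → 𝕜} {α : ℕ → 𝕜}
    {xs : ℕ → X} {x : X} (hA : ∀ k, IsKernelExpansion p u (A k) (xs k))
    (hx : Tendsto xs atTop (𝓝 x)) (hα : ∀ n, Tendsto (fun k => A k n) atTop (𝓝 (α n))) :
    IsKernelExpansion p u α x := by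
  have := hp.topologicalAddGroup
  have := hp.continuousSMul
  intro m
  have hrem : Tendsto (fun k => xs k - ∑ n ∈ range m, A k n • u n) atTop
      (𝓝 (x - ∑ n ∈ range m, α n • u n)) :=
    hx.sub (tendsto_finsetSum _ fun n _ => (hα n).smul_const (u n))
  refine Seminorm.mem_kerSubmodule.2 <|
    tendsto_nhds_unique (((hp.continuous_seminorm m).tendsto _).comp hrem) ?_
  simpa only [Function.comp_def, fun k => Seminorm.mem_kerSubmodule.1 (hA k m)] using
    tendsto_const_nhds

end KernelExpansion

theorem kernel_sequence_is_basic_general {𝕜 X : Type*} [RCLike 𝕜]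
    [AddCommGroup X] [Module 𝕜 X] [UniformSpace X]
    (p : ℕ → Seminorm 𝕜 X) (hp : WithSeminorms p) (hmono : ∀ n, p n ≤ p (n + 1))
    (u : ℕ → X) (hker : ∀ n, p n (u n) = 0) (hnker : ∀ n, p (n + 1) (u n) ≠ 0) :
    (∀ (a b : ℕ → 𝕜) (x : X),
        Filter.Tendsto (fun N => ∑ n ∈ Finset.range N, a n • u n) Filter.atTop (nhds x) →
        Filter.Tendsto (fun N => ∑ n ∈ Finset.range N, b n • u n) Filter.atTop (nhds x) →
        a = b) ∧
    (∀ (A : ℕ → ℕ → 𝕜) (xs : ℕ → X) (x : X),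
        (∀ k, Filter.Tendsto (fun N => ∑ n ∈ Finset.range N, A k n • u n)
          Filter.atTop (nhds (xs k))) →
        Filter.Tendsto xs Filter.atTop (nhds x) →
        ∃ α : ℕ → 𝕜, (∀ n, Filter.Tendsto (fun k => A k n) Filter.atTop (nhds (α n))) ∧
          Filter.Tendsto (fun N => ∑ n ∈ Finset.range N, α n • u n)
            Filter.atTop (nhds x)) := by
  have hmonotone : Monotone p := monotone_nat_of_le_succ hmono
  have hu : ∀ m n, m ≤ n → u n ∈ (p m).kerSubmodule := fun m n hmn =>
    le_antisymm ((hmonotone hmn (u n)).trans_eq (hker n)) (apply_nonneg _ _)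
  simp only [tendsto_partialSum_iff hp hu]
  refine ⟨fun a b x ha hb => ha.unique hmonotone hnker hb, fun A xs x hA hx => ?_⟩
  choose α hα using fun n =>
    cauchySeq_tendsto_of_complete (cauchySeq_coeff hp hmonotone hnker hA hx n)
  exact ⟨α, hα, IsKernelExpansion.of_tendsto hp hA hx hα⟩

/-- If `u n ∈ ker (p n) \ ker (p (n+1))` for all `n` (0-based indexing), then `(u n)` is
basic: coefficients of series representations are unique, and the coefficient functionals
are continuous: if `x k = ∑ n, A k n • u n` converges to `x`, then each coefficient
sequence converges and the limit coefficients represent `x`. -/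
theorem kernel_sequence_is_basic {𝕜 X : Type*} [RCLike 𝕜]
    [AddCommGroup X] [Module 𝕜 X] [UniformSpace X] [IsUniformAddGroup X]
    [ContinuousSMul 𝕜 X] [CompleteSpace X] [T2Space X]
    (p : ℕ → Seminorm 𝕜 X) (hp : WithSeminorms p) (hmono : ∀ n, p n ≤ p (n + 1))
    (u : ℕ → X) (hker : ∀ n, p n (u n) = 0) (hnker : ∀ n, p (n + 1) (u n) ≠ 0) :
    (∀ (a b : ℕ → 𝕜) (x : X),
        Filter.Tendsto (fun N => ∑ n ∈ Finset.range N, a n • u n) Filter.atTop (nhds x) →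
        Filter.Tendsto (fun N => ∑ n ∈ Finset.range N, b n • u n) Filter.atTop (nhds x) →
        a = b) ∧
    (∀ (A : ℕ → ℕ → 𝕜) (xs : ℕ → X) (x : X),
        (∀ k, Filter.Tendsto (fun N => ∑ n ∈ Finset.range N, A k n • u n)
          Filter.atTop (nhds (xs k))) →
        Filter.Tendsto xs Filter.atTop (nhds x) →
        ∃ α : ℕ → 𝕜, (∀ n, Filter.Tendsto (fun k => A k n) Filter.atTop (nhds (α n))) ∧
          Filter.Tendsto (fun N => ∑ n ∈ Finset.range N, α n • u n)
            Filter.atTop (nhds x)) :=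
  kernel_sequence_is_basic_general p hp hmono u hker hnker
end

section
/- Let X be an infinite-dimensional Fréchet space without continuous norm with increasing seminorms (p_n), Y a separable topological vector space with increasing seminorms (q_j), and (T_n) a sequence of continuous linear operators from X to Y. If there exist an increasing sequence (n_k) of positive integers and a set X_0 ⊂ X such that (1) for every j ≥ 1 and x ∈ X_0 the sequence (q_j(T_{n_k} x))_k is ultimately zero, and (2) for all n, K ≥ 1 the set ⋃_{k≥K} T_{n_k}(X_0 ∩ ker p_n) is dense in Y, then there exists a closed infinite-dimensional subspace M of X such that every non-zero vector of M is hypercyclic for (T_n) and M ∩ ker p has infinite dimension for every continuous seminorm p on X. -/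
/-!
By (2), late operators `T_{n_k}` carry vectors of `X₀ ∩ ker pₙ` as close as wished to any target.
Choose inductively `uₜ ∈ X₀ ∩ ker p_{nₜ}` and `kₜ`: `nₜ` so large that `ker p_{nₜ}` is annihilated
by every earlier `q_{t'} ∘ T_{n_{k_{t'}}}`, and `kₜ` so late that, by (1), `qₜ ∘ T_{n_{kₜ}}`
annihilates every earlier `u_{t'}`. Summing the stages in blocks gives vectors `eₛ` (block `s`
starts with a nonzero vector, then serves all targets) that are triangular with respect to the
seminorms and lie in `ker pₛ`. Hence `M = {∑ aₛ eₛ}` is closed, its coefficient functionals are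
continuous, and it meets the kernel of every continuous seminorm in an infinite-dimensional
subspace. For `x = ∑ aₛ eₛ` and a stage `t` of block `s`, `T_{n_{kₜ}} x` equals `aₛ T_{n_{kₜ}} uₜ`
modulo `ker qₜ`, so `aₛ ≠ 0` makes the orbit dense. If instead some `X₀ ∩ ker pₙ` is `{0}`, then
(2) makes `{0}` dense in `Y`, and the construction runs with `X₀ = X`, whose kernels `ker pₙ` are
nontrivial because `X` has no continuous norm.
-/

open Filter Topology

namespace Seminorm

variable {𝕜 X : Type*} [NormedField 𝕜] [AddCommGroup X] [Module 𝕜 X]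

theorem mem_kerSubmodule_s9 {p : Seminorm 𝕜 X} {x : X} : x ∈ p.kerSubmodule ↔ p x = 0 := Iff.rfl

theorem isClosed_kerSubmodule [TopologicalSpace X] {p : Seminorm 𝕜 X} (hp : Continuous p) :
    IsClosed (p.kerSubmodule : Set X) :=
  isClosed_singleton.preimage hp

theorem kerSubmodule_anti {p q : Seminorm 𝕜 X} (h : p ≤ q) : q.kerSubmodule ≤ p.kerSubmodule :=
  fun x hx => le_antisymm ((h x).trans_eq hx) (apply_nonneg p x)

theorem apply_eq_of_sub_mem_kerSubmodule {p : Seminorm 𝕜 X} {x y : X}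
    (h : x - y ∈ p.kerSubmodule) : p x = p y :=
  sub_eq_zero.1 (abs_nonpos_iff.1 ((abs_sub_map_le_sub p x y).trans_eq h))

theorem apply_sub_smul_le (p : Seminorm 𝕜 X) (z v w : X) (c : 𝕜) :
    p (z - c • w) ≤ p (z - c • v) + ‖c‖ * p (v - w) := by
  rw [← map_smul_eq_mul, show z - c • w = (z - c • v) + c • (v - w) by rw [smul_sub]; abel]
  exact map_add_le_add p _ _

end Seminorm

theorem Submodule.not_finite_of_linearIndependent {𝕜 X ι : Type*} [DivisionRing 𝕜]
    [AddCommGroup X] [Module 𝕜 X] [Infinite ι] {N : Submodule 𝕜 X} {v : ι → X}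
    (hv : LinearIndependent 𝕜 v) (hN : ∀ i, v i ∈ N) : ¬ Module.Finite 𝕜 N := fun _ =>
  Module.Finite.not_linearIndependent_of_infinite (fun i => (⟨v i, hN i⟩ : N))
    (LinearIndependent.of_comp N.subtype hv)

section HasSum

variable {ι X S : Type*} [AddCommGroup X] [TopologicalSpace X] [IsTopologicalAddGroup X]
  [SetLike S X] [AddSubgroupClass S X] {W : S} {f g : ι → X} {x y : X}

theorem HasSum.sub_mem (hW : IsClosed (W : Set X)) (hf : HasSum f x) (hg : HasSum g y)
    (h : ∀ i, f i - g i ∈ W) : x - y ∈ W :=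
  hW.mem_of_tendsto (hf.sub hg) (Eventually.of_forall fun _ => sum_mem fun i _ => h i)

theorem HasSum.sub_sum_mem [DecidableEq ι] (hW : IsClosed (W : Set X)) (hf : HasSum f x)
    {F : Finset ι} (h : ∀ i ∉ F, f i ∈ W) : x - ∑ i ∈ F, f i ∈ W := by
  have hF : HasSum (fun i => if i ∈ F then f i else 0) (∑ i ∈ F, f i) := by
    simpa using hasSum_sum_of_ne_finset_zero (s := F) (f := fun i => if i ∈ F then f i else 0)
      fun i hi => if_neg hi
  refine hf.sub_mem hW hF fun i => ?_
  by_cases hi : i ∈ F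
  · simp [hi, zero_mem]
  · simpa [hi] using h i hi

end HasSum

theorem Monotone.finset_sup_le {α β : Type*} [SemilatticeSup α] [OrderBot α] [SemilatticeSup β]
    [OrderBot β] {f : α → β} (hf : Monotone f) (s : Finset α) : s.sup f ≤ f (s.sup id) :=
  Finset.sup_le fun _ hi => hf (Finset.le_sup (f := id) hi)

section MonotoneSeminormFamily

variable {𝕜 E : Type*} [NontriviallyNormedField 𝕜] [AddCommGroup E] [Module 𝕜 E]
  [TopologicalSpace E] {p : ℕ → Seminorm 𝕜 E}

theorem WithSeminorms.exists_ball_subset (hp : WithSeminorms p) (hmono : Monotone p) {x : E}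
    {U : Set E} (hU : U ∈ 𝓝 x) : ∃ m, ∃ ε > 0, (p m).ball x ε ⊆ U := by
  obtain ⟨s, ε, hε, hsub⟩ := (hp.mem_nhds_iff x U).1 hU
  refine ⟨s.sup id, ε, hε, fun y hy => hsub ?_⟩
  rw [Seminorm.mem_ball] at hy ⊢
  exact (hmono.finset_sup_le s _).trans_lt hy

theorem WithSeminorms.mem_closure_of_forall_exists_lt (hp : WithSeminorms p)
    (hmono : Monotone p) {s : Set E} {x : E} (h : ∀ m, ∀ ε > 0, ∃ y ∈ s, p m (y - x) < ε) :
    x ∈ closure s := by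
  refine mem_closure_iff_nhds.2 fun U hU => ?_
  obtain ⟨m, ε, hε, hball⟩ := hp.exists_ball_subset hmono hU
  obtain ⟨y, hys, hy⟩ := h m ε hε
  exact ⟨y, hball ((Seminorm.mem_ball _).2 hy), hys⟩

theorem WithSeminorms.eventually_apply_eq_zero_of_continuous (hp : WithSeminorms p)
    (hmono : Monotone p) {r : Seminorm 𝕜 E} (hr : Continuous r) :
    ∀ᶠ N in atTop, ∀ x, p N x = 0 → r x = 0 := by
  obtain ⟨s, C, -, hle⟩ := Seminorm.bound_of_continuous hp r hr
  filter_upwards [eventually_ge_atTop (s.sup id)] with N hN x hx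
  have hs : s.sup p x = 0 :=
    le_antisymm (((hmono.finset_sup_le s).trans (hmono hN)) x |>.trans_eq hx)
      (apply_nonneg _ x)
  exact le_antisymm ((hle x).trans_eq (by simp [hs])) (apply_nonneg r x)

theorem WithSeminorms.eventually_apply_ne_zero [T1Space E] (hp : WithSeminorms p)
    (hmono : Monotone p) {x : E} (hx : x ≠ 0) : ∀ᶠ N in atTop, p N x ≠ 0 := by
  obtain ⟨l, hl⟩ := hp.separating_of_T1 x hx
  filter_upwards [eventually_ge_atTop l] with N hN h0
  exact hl (le_antisymm ((hmono hN x).trans_eq h0) (apply_nonneg _ x))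

end MonotoneSeminormFamily

section Summable

variable {𝕜 E : Type*} [NontriviallyNormedField 𝕜] [AddCommGroup E] [Module 𝕜 E]
  [UniformSpace E] [IsUniformAddGroup E] [CompleteSpace E] {p : ℕ → Seminorm 𝕜 E}

theorem WithSeminorms.summable_of_apply_eq_zero (hp : WithSeminorms p) (hmono : Monotone p)
    {f : ℕ → E} (hf : ∀ m i, m ≤ i → p m (f i) = 0) : Summable f := by
  refine summable_iff_vanishing.2 fun U hU => ?_
  obtain ⟨m, ε, hε, hball⟩ := hp.exists_ball_subset hmono hU
  refine ⟨Finset.range m, fun t ht => hball ?_⟩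
  have hker : ∑ i ∈ t, f i ∈ (p m).kerSubmodule := Submodule.sum_mem _ fun i hi =>
    hf m i (by simpa using Finset.disjoint_left.1 ht hi)
  rwa [Seminorm.mem_ball, sub_zero, Seminorm.mem_kerSubmodule_s9.1 hker]

end Summable

def seriesSpan (𝕜 : Type*) {X : Type*} [NormedField 𝕜] [AddCommGroup X] [Module 𝕜 X]
    [TopologicalSpace X] [IsTopologicalAddGroup X] [ContinuousConstSMul 𝕜 X] (e : ℕ → X) :
    Submodule 𝕜 X where
  carrier := {x | ∃ a : ℕ → 𝕜, HasSum (fun i => a i • e i) x}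
  zero_mem' := ⟨0, by simp⟩
  add_mem' := fun ⟨a, ha⟩ ⟨b, hb⟩ => ⟨a + b, by simpa [add_smul] using ha.add hb⟩
  smul_mem' c := fun ⟨a, ha⟩ => ⟨c • a, by simpa [smul_smul] using ha.const_smul c⟩

theorem mem_seriesSpan {𝕜 X : Type*} [NormedField 𝕜] [AddCommGroup X] [Module 𝕜 X]
    [TopologicalSpace X] [IsTopologicalAddGroup X] [ContinuousConstSMul 𝕜 X] (e : ℕ → X)
    (s : ℕ) : e s ∈ seriesSpan 𝕜 e :=
  ⟨Pi.single s 1, by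
    convert hasSum_ite_eq s (e s) using 2 with i
    by_cases h : i = s <;> simp [h]⟩

structure IsGradedSequence {𝕜 X : Type*} [NormedField 𝕜] [AddCommGroup X] [Module 𝕜 X]
    (p : ℕ → Seminorm 𝕜 X) (ℓ : ℕ → ℕ) (e : ℕ → X) : Prop where
  apply_ne_zero : ∀ s, p (ℓ s) (e s) ≠ 0
  apply_eq_zero_of_lt : ∀ s i, s < i → p (ℓ s) (e i) = 0
  apply_eq_zero_of_le : ∀ m s, m ≤ s → p m (e s) = 0

namespace IsGradedSequence

variable {𝕜 X : Type*} [NontriviallyNormedField 𝕜] [AddCommGroup X] [Module 𝕜 X]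
  [TopologicalSpace X] [IsTopologicalAddGroup X] {p : ℕ → Seminorm 𝕜 X} {ℓ : ℕ → ℕ} {e : ℕ → X}

theorem norm_coeff_mul_le (hp : WithSeminorms p) (he : IsGradedSequence p ℓ e) {a : ℕ → 𝕜}
    {x : X} (hx : HasSum (fun i => a i • e i) x) (s : ℕ) :
    ‖a s‖ * p (ℓ s) (e s) ≤ p (ℓ s) x + ∑ i ∈ Finset.range s, ‖a i‖ * p (ℓ s) (e i) := by
  set q := p (ℓ s)
  have htail : x - ∑ i ∈ Finset.range (s + 1), a i • e i ∈ q.kerSubmodule :=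
    hx.sub_sum_mem (q.isClosed_kerSubmodule (hp.continuous_seminorm _)) fun i hi => by
      rw [Seminorm.mem_kerSubmodule_s9, map_smul_eq_mul,
        he.apply_eq_zero_of_lt s i (by simpa using hi), mul_zero]
  have hsplit : a s • e s = x - (x - ∑ i ∈ Finset.range (s + 1), a i • e i) -
      ∑ i ∈ Finset.range s, a i • e i := by
    rw [Finset.sum_range_succ]; abel
  calc ‖a s‖ * q (e s) = q (a s • e s) := (map_smul_eq_mul q _ _).symm
    _ ≤ q x + q (x - ∑ i ∈ Finset.range (s + 1), a i • e i) +
        q (∑ i ∈ Finset.range s, a i • e i) := by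
      rw [hsplit]
      exact (map_sub_le_add q _ _).trans (add_le_add_left (map_sub_le_add q _ _) _)
    _ ≤ q x + ∑ i ∈ Finset.range s, ‖a i‖ * q (e i) := by
      rw [Seminorm.mem_kerSubmodule_s9.1 htail, add_zero]
      gcongr
      refine (Finset.le_sum_of_subadditive q (map_zero q).le (map_add_le_add q) _ _).trans ?_
      simp only [map_smul_eq_mul, le_refl]

theorem exists_norm_coeff_le (hp : WithSeminorms p) (hmono : Monotone p)
    (he : IsGradedSequence p ℓ e) (s : ℕ) :
    ∃ m C, ∀ (a : ℕ → 𝕜) x, HasSum (fun i => a i • e i) x → ‖a s‖ ≤ C * p m x := by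
  suffices h : ∀ s, ∃ m, ∃ C ≥ 0, ∀ i < s, ∀ (a : ℕ → 𝕜) x,
      HasSum (fun i => a i • e i) x → ‖a i‖ ≤ C * p m x by
    obtain ⟨m, C, -, hC⟩ := h (s + 1)
    exact ⟨m, C, hC s s.lt_succ_self⟩
  intro s
  induction s with
  | zero => exact ⟨0, 0, le_rfl, fun i hi => absurd hi i.not_lt_zero⟩
  | succ s ih =>
    obtain ⟨m, C, hC0, hC⟩ := ih
    set L := ℓ s
    set B := ∑ i ∈ Finset.range s, p L (e i)
    have hLs : 0 < p L (e s) := (apply_nonneg _ _).lt_of_ne' (he.apply_ne_zero s)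
    refine ⟨max m L, max C ((1 + C * B) / p L (e s)), le_max_of_le_left hC0,
      fun i hi a x hx => ?_⟩
    have hmx : p m x ≤ p (max m L) x := hmono (le_max_left m L) x
    have hLx : p L x ≤ p (max m L) x := hmono (le_max_right m L) x
    rcases Nat.lt_succ_iff_lt_or_eq.1 hi with hi | rfl
    · exact (hC i hi a x hx).trans (mul_le_mul (le_max_left _ _) hmx (apply_nonneg _ _)
        (le_max_of_le_left hC0))
    · refine le_trans ?_ (mul_le_mul_of_nonneg_right (le_max_right _ _) (apply_nonneg _ _))
      rw [div_mul_eq_mul_div, le_div_iff₀ hLs]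
      calc ‖a i‖ * p L (e i) ≤ p L x + ∑ j ∈ Finset.range i, ‖a j‖ * p L (e j) :=
            he.norm_coeff_mul_le hp hx i
        _ ≤ p L x + ∑ j ∈ Finset.range i, C * p m x * p L (e j) := by
          gcongr with j hj
          exact hC j (Finset.mem_range.1 hj) a x hx
        _ = p L x + C * B * p m x := by rw [← Finset.mul_sum]; ring
        _ ≤ (1 + C * B) * p (max m L) x := by
          have hB : 0 ≤ C * B :=
            mul_nonneg hC0 (Finset.sum_nonneg fun _ _ => apply_nonneg _ _)
          nlinarith

theorem linearIndependent (hp : WithSeminorms p) (hmono : Monotone p)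
    (he : IsGradedSequence p ℓ e) : LinearIndependent 𝕜 e := by
  classical
  refine linearIndependent_iff'.2 fun F g hg i hi => ?_
  obtain ⟨m, C, hC⟩ := he.exists_norm_coeff_le hp hmono i
  have hsum : HasSum (fun j => (if j ∈ F then g j else 0) • e j) _ :=
    hasSum_sum_of_ne_finset_zero (s := F) fun j hj => by simp [hj]
  rw [Finset.sum_congr rfl fun j hj => by rw [if_pos hj], hg] at hsum
  simpa [hi] using hC _ _ hsum

theorem tendsto_of_tendsto_coeff (hp : WithSeminorms p) (he : IsGradedSequence p ℓ e)
    [ContinuousSMul 𝕜 X] {a : ℕ → ℕ → 𝕜} {b : ℕ → 𝕜} {x : ℕ → X} {y : X}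
    (hx : ∀ l, HasSum (fun i => a l i • e i) (x l)) (hy : HasSum (fun i => b i • e i) y)
    (hab : ∀ i, Tendsto (fun l => a l i) atTop (𝓝 (b i))) : Tendsto x atTop (𝓝 y) := by
  classical
  refine (hp.tendsto_nhds x y).2 fun m ε hε => ?_
  set S : ℕ → X := fun l => ∑ i ∈ Finset.range m, (a l i - b i) • e i
  have hle : ∀ l, p m (x l - y) ≤ p m (S l) := fun l => by
    have hdiff : HasSum (fun i => (a l i - b i) • e i) (x l - y) := by
      simpa [sub_smul] using (hx l).sub hy
    have hker := hdiff.sub_sum_mem (F := Finset.range m)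
      ((p m).isClosed_kerSubmodule (hp.continuous_seminorm m)) fun i hi => by
        rw [Seminorm.mem_kerSubmodule_s9, map_smul_eq_mul,
          he.apply_eq_zero_of_le m i (by simpa using hi), mul_zero]
    exact (Seminorm.apply_eq_of_sub_mem_kerSubmodule hker).le
  have hS : Tendsto S atTop (𝓝 0) := by
    simpa using tendsto_finsetSum (Finset.range m) fun i _ =>
      ((hab i).sub_const (b i)).smul_const (e i)
  have hpS : Tendsto (fun l => p m (S l)) atTop (𝓝 0) := by
    simpa [Function.comp_def] using ((hp.continuous_seminorm m).tendsto 0).comp hS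
  filter_upwards [hpS.eventually (gt_mem_nhds hε)] with l hl
  exact (hle l).trans_lt hl

theorem cauchySeq_coeff (hp : WithSeminorms p) (hmono : Monotone p)
    (he : IsGradedSequence p ℓ e) {a : ℕ → ℕ → 𝕜} {x : ℕ → X} {x₀ : X}
    (hx : ∀ l, HasSum (fun i => a l i • e i) (x l))
    (hlim : Tendsto x atTop (𝓝 x₀)) (i : ℕ) : CauchySeq fun l => a l i := by
  obtain ⟨m, C, hC⟩ := he.exists_norm_coeff_le hp hmono i
  rw [cauchySeq_iff_tendsto_dist_atTop_0]
  have h0 : Tendsto (fun n : ℕ × ℕ => x n.1 - x n.2) atTop (𝓝 0) := by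
    rw [← prod_atTop_atTop_eq]
    simpa using (hlim.comp tendsto_fst).sub (hlim.comp tendsto_snd)
  have hC0 : Tendsto (fun n : ℕ × ℕ => C * p m (x n.1 - x n.2)) atTop (𝓝 0) := by
    simpa [Function.comp_def] using
      (((hp.continuous_seminorm m).tendsto 0).comp h0).const_mul C
  refine squeeze_zero (fun _ => dist_nonneg) (fun n => ?_) hC0
  rw [dist_eq_norm]
  exact hC (fun i => a n.1 i - a n.2 i) _ (by simpa [sub_smul] using (hx n.1).sub (hx n.2))

theorem not_finite_seriesSpan [ContinuousConstSMul 𝕜 X] (hp : WithSeminorms p)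
    (hmono : Monotone p) (he : IsGradedSequence p ℓ e) : ¬ Module.Finite 𝕜 (seriesSpan 𝕜 e) :=
  Submodule.not_finite_of_linearIndependent (he.linearIndependent hp hmono) (mem_seriesSpan e)

theorem not_finite_inf_kerSubmodule [ContinuousConstSMul 𝕜 X] (hp : WithSeminorms p)
    (hmono : Monotone p) (he : IsGradedSequence p ℓ e) {r : Seminorm 𝕜 X} (hr : Continuous r) :
    ¬ Module.Finite 𝕜 ↥(seriesSpan 𝕜 e ⊓ r.kerSubmodule) := by
  obtain ⟨N, hN⟩ := (hp.eventually_apply_eq_zero_of_continuous hmono hr).exists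
  exact Submodule.not_finite_of_linearIndependent
    ((he.linearIndependent hp hmono).comp _ (add_left_injective N))
    fun i => ⟨mem_seriesSpan e _, hN _ (he.apply_eq_zero_of_le N _ (N.le_add_left i))⟩

end IsGradedSequence

namespace IsGradedSequence

variable {𝕜 X : Type*} [NontriviallyNormedField 𝕜] [AddCommGroup X] [Module 𝕜 X]
  [UniformSpace X] [IsUniformAddGroup X] [CompleteSpace X]
  {p : ℕ → Seminorm 𝕜 X} {ℓ : ℕ → ℕ} {e : ℕ → X}

theorem summable (hp : WithSeminorms p) (hmono : Monotone p) (he : IsGradedSequence p ℓ e)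
    (a : ℕ → 𝕜) : Summable fun i => a i • e i :=
  hp.summable_of_apply_eq_zero hmono fun m i hmi => by
    rw [map_smul_eq_mul, he.apply_eq_zero_of_le m i hmi, mul_zero]

theorem isClosed_seriesSpan [CompleteSpace 𝕜] [ContinuousSMul 𝕜 X] [T2Space X]
    (hp : WithSeminorms p) (hmono : Monotone p) (he : IsGradedSequence p ℓ e) :
    IsClosed (seriesSpan 𝕜 e : Set X) := by
  have := hp.firstCountableTopology
  refine isClosed_of_closure_subset fun x₀ hx₀ => ?_
  obtain ⟨x, hxM, hlim⟩ := mem_closure_iff_seq_limit.1 hx₀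
  choose a ha using hxM
  choose b hb using fun i =>
    cauchySeq_tendsto_of_complete (he.cauchySeq_coeff hp hmono ha hlim i)
  obtain ⟨y, hy⟩ := he.summable hp hmono b
  exact ⟨b, tendsto_nhds_unique (he.tendsto_of_tendsto_coeff hp ha hy hb) hlim ▸ hy⟩

end IsGradedSequence

theorem exists_seq_of_forall_fin_exists {α : Type*} {P : ∀ n, (Fin n → α) → α → Prop}
    (h : ∀ n f, ∃ a, P n f a) : ∃ g : ℕ → α, ∀ n, P n (fun i => g i) (g n) := by
  choose c hc using h
  refine ⟨fun n => Nat.strongRec (fun n ih => c n fun i => ih i i.2) n, fun n => ?_⟩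
  dsimp only
  rw [Nat.strongRec_eq]
  exact hc n _

section Stages

variable {𝕜 X : Type*} [NontriviallyNormedField 𝕜] [AddCommGroup X] [Module 𝕜 X]
  [TopologicalSpace X] [T1Space X] {p : ℕ → Seminorm 𝕜 X}

theorem exists_stage_sequence (hp : WithSeminorms p) (hmono : Monotone p)
    {R : ℕ → ℕ → Seminorm 𝕜 X} (hR : ∀ t k, Continuous (R t k)) {X0 : Set X}
    (hX0 : ∀ t, ∀ x ∈ X0, ∀ᶠ k in atTop, R t k x = 0) {D : ℕ → X → ℕ → Prop}
    (hD : ∀ t n K, ∃ u ∈ X0, p n u = 0 ∧ ∃ k ≥ K, D t u k) :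
    ∃ (u : ℕ → X) (k n : ℕ → ℕ), (∀ t, p (n t) (u t) = 0 ∧ D t (u t) (k t)) ∧
      ∀ t' t, t' < t → R t (k t) (u t') = 0 ∧ n t' < n t ∧
        (∀ x, p (n t) x = 0 → R t' (k t') x = 0) ∧ (p (n t) (u t') = 0 → u t' = 0) := by
  -- stage `t` is the triple `(u t, k t, n t)`; it may depend on all earlier stages
  obtain ⟨g, hg⟩ := exists_seq_of_forall_fin_exists (α := X × ℕ × ℕ)
    (P := fun t f σ => σ.1 ∈ X0 ∧ p σ.2.2 σ.1 = 0 ∧ D t σ.1 σ.2.1 ∧ ∀ i : Fin t,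
      ((f i).1 ∈ X0 → R t σ.2.1 (f i).1 = 0) ∧ (f i).2.2 < σ.2.2 ∧
      (∀ x, p σ.2.2 x = 0 → R i (f i).2.1 x = 0) ∧ (p σ.2.2 (f i).1 = 0 → (f i).1 = 0))
    fun t f => by
      obtain ⟨n, hn⟩ : ∃ n, ∀ i : Fin t, (f i).2.2 < n ∧ (∀ x, p n x = 0 → R i (f i).2.1 x = 0) ∧
          (p n (f i).1 = 0 → (f i).1 = 0) := (eventually_all.2 fun i =>
        (eventually_gt_atTop (f i).2.2).and <|
        (hp.eventually_apply_eq_zero_of_continuous hmono (hR i (f i).2.1)).and <| by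
          by_cases h0 : (f i).1 = 0
          · exact Eventually.of_forall fun _ _ => h0
          · exact (hp.eventually_apply_ne_zero hmono h0).mono fun _ hN h => absurd h hN).exists
      obtain ⟨K, hK⟩ := eventually_atTop.1 (eventually_all.2 fun i : Fin t =>
        eventually_imp_distrib_left.2 fun hi => hX0 t _ hi)
      obtain ⟨u, hu, hun, k, hkK, hDk⟩ := hD t n K
      exact ⟨(u, k, n), hu, hun, hDk, fun i => ⟨hK k hkK i, hn i⟩⟩
  refine ⟨fun t => (g t).1, fun t => (g t).2.1, fun t => (g t).2.2,
    fun t => ⟨(hg t).2.1, (hg t).2.2.1⟩, fun t' t ht => ?_⟩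
  obtain ⟨hkill, hlt, hker, hne⟩ := (hg t).2.2.2 ⟨t', ht⟩
  exact ⟨hkill (hg t').1, hlt, hker, hne⟩

end Stages

noncomputable def fiberSum {X : Type*} [AddCommMonoid X] [TopologicalSpace X] (σ : ℕ → ℕ)
    (u : ℕ → X) (s : ℕ) : X :=
  ∑' t, if σ t = s then u t else 0

section FiberSum

variable {𝕜 X : Type*} [NontriviallyNormedField 𝕜] [AddCommGroup X] [Module 𝕜 X]
  [UniformSpace X] [IsUniformAddGroup X] [CompleteSpace X] {p : ℕ → Seminorm 𝕜 X}

theorem hasSum_fiberSum (hp : WithSeminorms p) (hmono : Monotone p) {u : ℕ → X}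
    (hu : ∀ m t, m ≤ t → p m (u t) = 0) (σ : ℕ → ℕ) (s : ℕ) :
    HasSum (fun t => if σ t = s then u t else 0) (fiberSum σ u s) :=
  (hp.summable_of_apply_eq_zero hmono fun m t h => by
    split_ifs
    exacts [hu m t h, map_zero _]).hasSum

theorem isGradedSequence_fiberSum (hp : WithSeminorms p) (hmono : Monotone p) {σ : ℕ → ℕ}
    (hσ : ∀ s, σ (2 * s) = s) (hσ_le : ∀ t, 2 * σ t ≤ t) {u : ℕ → X} {n : ℕ → ℕ}
    (hn : StrictMono n) (hu : ∀ t, p (n t) (u t) = 0)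
    (hlead : ∀ s, p (n (2 * s + 1)) (u (2 * s)) ≠ 0) :
    IsGradedSequence p (fun s => n (2 * s + 1)) (fiberSum σ u) := by
  have hker : ∀ m t, m ≤ n t → u t ∈ (p m).kerSubmodule := fun m t h =>
    Seminorm.kerSubmodule_anti (hmono h) (hu t)
  have hsum := hasSum_fiberSum hp hmono (fun m t h => hker m t (h.trans (hn.id_le t))) σ
  have hclosed : ∀ m, IsClosed ((p m).kerSubmodule : Set X) := fun m =>
    (p m).isClosed_kerSubmodule (hp.continuous_seminorm m)
  have hmem : ∀ m s, (∀ t, σ t = s → m ≤ n t) → fiberSum σ u s ∈ (p m).kerSubmodule :=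
    fun m s h => tsum_mem (hclosed m) fun t => by
      split_ifs with ht
      exacts [hker m t (h t ht), zero_mem _]
  refine ⟨fun s => ?_, fun s i hsi => hmem _ i fun t ht => hn.monotone (by grind),
    fun m s hms => hmem m s fun t ht => hms.trans (by grind [hn.id_le t])⟩
  have hrest : fiberSum σ u s - u (2 * s) ∈ (p (n (2 * s + 1))).kerSubmodule :=
    (hsum s).sub_mem (hclosed _) (hasSum_ite_eq (2 * s) (u (2 * s))) fun t => by
      by_cases ht : t = 2 * s
      · simp [ht, hσ]
      · simp only [ht, if_false, sub_zero]
        split_ifs with hts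
        exacts [hker _ t (hn.monotone (by grind)), zero_mem _]
  rw [Seminorm.apply_eq_of_sub_mem_kerSubmodule hrest]
  exact hlead s

end FiberSum

theorem sub_smul_mem_of_hasSum_fiberSum {𝕜 X : Type*} [NormedField 𝕜] [AddCommGroup X]
    [Module 𝕜 X] [TopologicalSpace X] [IsTopologicalAddGroup X] [ContinuousConstSMul 𝕜 X]
    {W : Submodule 𝕜 X} (hW : IsClosed (W : Set X)) {σ : ℕ → ℕ}
    {u : ℕ → X} (hsum : ∀ s, HasSum (fun t => if σ t = s then u t else 0) (fiberSum σ u s))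
    {t : ℕ} (hu : ∀ t', t' ≠ t → u t' ∈ W) {a : ℕ → 𝕜} {x : X}
    (hx : HasSum (fun s => a s • fiberSum σ u s) x) : x - a (σ t) • u t ∈ W := by
  have hfiber : ∀ s, fiberSum σ u s - (if σ t = s then u t else 0) ∈ W := fun s =>
    (hsum s).sub_mem hW (hasSum_ite_eq t _) fun t' => by
      by_cases ht' : t' = t
      · simp [ht']
      · simp only [ht', if_false, sub_zero]
        split_ifs
        exacts [hu t' ht', zero_mem _]
  have hsingle : HasSum (fun s => a s • if σ t = s then u t else 0) (a (σ t) • u t) := by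
    convert hasSum_ite_eq (σ t) (a (σ t) • u t) using 2 with s
    by_cases hs : s = σ t
    · simp [hs]
    · simp [hs, Ne.symm hs]
  exact hx.sub_mem hW hsingle fun s => by
    rw [← smul_sub]
    exact W.smul_mem _ (hfiber s)

/- Stage `2 * s` supplies the leading vector of block `s`; stage `2 * r + 1` serves block
`(unpair r).1` with target index `(unpair (unpair r).2).1`, so every pair (block, target) recurs
at arbitrarily late stages. -/
def servedIndex (t : ℕ) : ℕ := if Even t then t / 2 else (Nat.unpair (t / 2)).1

def targetIndex (t : ℕ) : ℕ := (Nat.unpair (Nat.unpair (t / 2)).2).1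

theorem servedIndex_two_mul (s : ℕ) : servedIndex (2 * s) = s := by
  simp [servedIndex]

theorem two_mul_servedIndex_le (t : ℕ) : 2 * servedIndex t ≤ t := by
  unfold servedIndex
  split_ifs
  · omega
  · have := Nat.unpair_left_le (t / 2)
    omega

theorem exists_odd_stage (s m N : ℕ) :
    ∃ t ≥ N, ¬ Even t ∧ servedIndex t = s ∧ targetIndex t = m := by
  have hN : N ≤ Nat.pair s (Nat.pair m N) :=
    (Nat.right_le_pair m N).trans (Nat.right_le_pair s _)
  have hdiv : (2 * Nat.pair s (Nat.pair m N) + 1) / 2 = Nat.pair s (Nat.pair m N) := by omega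
  have hodd : ¬ Even (2 * Nat.pair s (Nat.pair m N) + 1) := by simp
  exact ⟨_, by omega, hodd, by simp [servedIndex, hodd, hdiv], by simp [targetIndex, hdiv]⟩

section Density

variable {𝕜 Y : Type*} [NontriviallyNormedField 𝕜] [AddCommGroup Y] [Module 𝕜 Y]
  [TopologicalSpace Y] {q : ℕ → Seminorm 𝕜 Y}

theorem WithSeminorms.dense_range_of_forall_exists_lt {ι : Type*} (hq : WithSeminorms q)
    (hmono : Monotone q) {z : ι → Y} {w : ℕ → Y} (hw : DenseRange w)
    (h : ∀ m j, ∀ ε > 0, ∃ i, q j (z i - w m) < ε) : Dense (Set.range z) := by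
  have hsub : Set.range w ⊆ closure (Set.range z) := by
    rintro _ ⟨m, rfl⟩
    refine hq.mem_closure_of_forall_exists_lt hmono fun j ε hε => ?_
    obtain ⟨i, hi⟩ := h m j ε hε
    exact ⟨z i, ⟨i, rfl⟩, hi⟩
  exact dense_closure.1 (hw.mono hsub)

end Density

theorem exists_mem_kerSubmodule_apply_sub_lt {𝕜 X Y : Type*} [NormedField 𝕜] [AddCommGroup X]
    [Module 𝕜 X] [AddCommGroup Y] [Module 𝕜 Y] [TopologicalSpace Y] [IsTopologicalAddGroup Y]
    {p : Seminorm 𝕜 X} {S : ℕ → X → Y} {X0 : Set X} {K : ℕ}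
    (hS : Dense (⋃ k ≥ K, S k '' (X0 ∩ (p.kerSubmodule : Set X)))) {r : Seminorm 𝕜 Y}
    (hr : Continuous r) (y : Y) {ρ : ℝ} (hρ : 0 < ρ) :
    ∃ u ∈ X0, p u = 0 ∧ ∃ k ≥ K, r (S k u - y) < ρ := by
  obtain ⟨_, hz, hzS⟩ := hS.inter_open_nonempty {z | r (z - y) < ρ}
    (isOpen_lt (hr.comp (continuous_id.sub continuous_const)) continuous_const) ⟨y, by simpa⟩
  simp only [Set.mem_iUnion, Set.mem_image] at hzS
  obtain ⟨k, hk, u, ⟨hu, hpu⟩, rfl⟩ := hzS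
  exact ⟨u, hu, hpu, k, hk, hz⟩

theorem exists_hypercyclic_subspace_of_forall_exists_ne_zero {𝕜 X Y : Type*} [RCLike 𝕜]
    [AddCommGroup X] [Module 𝕜 X] [UniformSpace X] [IsUniformAddGroup X]
    [ContinuousSMul 𝕜 X] [CompleteSpace X] [T2Space X]
    [AddCommGroup Y] [Module 𝕜 Y] [TopologicalSpace Y] [IsTopologicalAddGroup Y]
    [ContinuousSMul 𝕜 Y] [TopologicalSpace.SeparableSpace Y]
    {p : ℕ → Seminorm 𝕜 X} (hp : WithSeminorms p) (hpm : Monotone p)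
    {q : ℕ → Seminorm 𝕜 Y} (hq : WithSeminorms q) (hqm : Monotone q)
    (S : ℕ → X →L[𝕜] Y) {X0 : Set X}
    (h1 : ∀ j, ∀ x ∈ X0, ∀ᶠ k in atTop, q j (S k x) = 0)
    (h2 : ∀ n K, Dense (⋃ k ≥ K, S k '' (X0 ∩ ((p n).kerSubmodule : Set X))))
    (hlead : ∀ n, ∃ u ∈ X0, u ≠ 0 ∧ p n u = 0) :
    ∃ M : Submodule 𝕜 X, IsClosed (M : Set X) ∧ ¬ Module.Finite 𝕜 M ∧
      (∀ x ∈ M, x ≠ 0 → Dense (Set.range fun k => S k x)) ∧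
      (∀ r : Seminorm 𝕜 X, Continuous r → ¬ Module.Finite 𝕜 ↥(M ⊓ r.kerSubmodule)) := by
  obtain ⟨yd, hyd⟩ := TopologicalSpace.exists_dense_seq Y
  have hR : ∀ t k, Continuous ((q t).comp (S k).toLinearMap) := fun t k =>
    (hq.continuous_seminorm t).comp (S k).continuous
  obtain ⟨u, k, n, hstage, hlater⟩ := exists_stage_sequence hp hpm hR h1
    (D := fun t u k => if Even t then u ≠ 0 else q t (S k u - yd (targetIndex t)) < 1 / (t + 1))
    fun t n K => by
      by_cases ht : Even t
      · obtain ⟨u, hu, hu0, hun⟩ := hlead n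
        exact ⟨u, hu, hun, K, le_rfl, by simpa [ht] using hu0⟩
      · simpa [ht] using exists_mem_kerSubmodule_apply_sub_lt (h2 n K)
          (hq.continuous_seminorm t) (yd (targetIndex t)) (by positivity : (0 : ℝ) < 1 / (t + 1))
  have hn : StrictMono n := fun _ _ h => (hlater _ _ h).2.1
  have hsum := hasSum_fiberSum hp hpm (fun m t h =>
    Seminorm.kerSubmodule_anti (hpm (h.trans (hn.id_le t))) (hstage t).1) servedIndex
  have he : IsGradedSequence p (fun s => n (2 * s + 1)) (fiberSum servedIndex u) :=
    isGradedSequence_fiberSum hp hpm servedIndex_two_mul two_mul_servedIndex_le hn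
      (fun t => (hstage t).1) fun s h => by
        have hne : u (2 * s) ≠ 0 := by simpa [even_two_mul] using (hstage (2 * s)).2
        exact hne ((hlater _ _ (by omega)).2.2.2 h)
  refine ⟨seriesSpan 𝕜 _, he.isClosed_seriesSpan hp hpm, he.not_finite_seriesSpan hp hpm, ?_,
    fun r hr => he.not_finite_inf_kerSubmodule hp hpm hr⟩
  rintro x ⟨a, hx⟩ hx0
  obtain ⟨s, hs⟩ : ∃ s, a s ≠ 0 := by
    by_contra! h
    exact hx0 (hx.unique (by simp [h]))
  have horbit : ∀ t, q t (S (k t) x - a (servedIndex t) • S (k t) (u t)) = 0 := fun t => by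
    have hW := Seminorm.isClosed_kerSubmodule (hR t (k t))
    have hmem := sub_smul_mem_of_hasSum_fiberSum hW hsum (fun t' ht' => by
      rcases ht'.lt_or_gt with h | h
      exacts [(hlater t' t h).1, (hlater t t' h).2.2.1 _ (hstage t').1]) hx
    simpa using Seminorm.mem_kerSubmodule_s9.1 hmem
  refine hq.dense_range_of_forall_exists_lt hqm (w := fun m => a s • yd m)
    ((Homeomorph.smulOfNeZero (a s) hs).surjective.denseRange.comp hyd
      (continuous_const_smul (a s))) fun m j ε hε => ?_
  obtain ⟨N, hN⟩ := exists_nat_one_div_lt (div_pos hε (norm_pos_iff.2 hs))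
  obtain ⟨t, htN, hodd, hts, htm⟩ := exists_odd_stage s m (max j N)
  have htarget : q t (S (k t) (u t) - yd m) < 1 / (t + 1) := by
    simpa [hodd, htm] using (hstage t).2
  refine ⟨k t, ?_⟩
  calc q j (S (k t) x - a s • yd m) ≤ q t (S (k t) x - a s • yd m) := hqm (by omega) _
    _ ≤ ‖a s‖ * q t (S (k t) (u t) - yd m) := by
      simpa [← hts, horbit] using (q t).apply_sub_smul_le (S (k t) x) (S (k t) (u t)) (yd m) (a s)
    _ ≤ ‖a s‖ * (1 / (N + 1)) := by
      gcongr
      exact htarget.le.trans (by gcongr; omega)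
    _ < ε := by rwa [lt_div_iff₀' (norm_pos_iff.2 hs)] at hN

theorem hypercyclic_subspace_type2_criterion_general {𝕜 X Y : Type*} [RCLike 𝕜]
    [AddCommGroup X] [Module 𝕜 X] [UniformSpace X] [IsUniformAddGroup X]
    [ContinuousSMul 𝕜 X] [CompleteSpace X] [T2Space X]
    [AddCommGroup Y] [Module 𝕜 Y] [TopologicalSpace Y] [IsTopologicalAddGroup Y]
    [ContinuousSMul 𝕜 Y] [TopologicalSpace.SeparableSpace Y]
    (p : ℕ → Seminorm 𝕜 X) (hp : WithSeminorms p) (hpm : ∀ n, p n ≤ p (n + 1))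
    (hnonorm : ¬ ∃ q : Seminorm 𝕜 X, Continuous q ∧ ∀ x : X, x ≠ 0 → q x ≠ 0)
    (q : ℕ → Seminorm 𝕜 Y) (hq : WithSeminorms q) (hqm : ∀ j, q j ≤ q (j + 1))
    (T : ℕ → X →L[𝕜] Y)
    (nk : ℕ → ℕ) (X0 : Set X)
    (h1 : ∀ j : ℕ, ∀ x ∈ X0, ∀ᶠ k in Filter.atTop, q j (T (nk k) x) = 0)
    (h2 : ∀ n K : ℕ, Dense (⋃ k ≥ K, T (nk k) '' (X0 ∩ ((p n).kerSubmodule : Set X)))) :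
    ∃ M : Submodule 𝕜 X, IsClosed (M : Set X) ∧ ¬ Module.Finite 𝕜 M ∧
      (∀ x ∈ M, x ≠ 0 → Dense (Set.range fun n => T n x)) ∧
      (∀ r : Seminorm 𝕜 X, Continuous r → ¬ Module.Finite 𝕜 ↥(M ⊓ r.kerSubmodule)) := by
  have hpm := monotone_nat_of_le_succ hpm
  have hqm := monotone_nat_of_le_succ hqm
  suffices ∃ M : Submodule 𝕜 X, IsClosed (M : Set X) ∧ ¬ Module.Finite 𝕜 M ∧
      (∀ x ∈ M, x ≠ 0 → Dense (Set.range fun k => T (nk k) x)) ∧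
      (∀ r : Seminorm 𝕜 X, Continuous r → ¬ Module.Finite 𝕜 ↥(M ⊓ r.kerSubmodule)) by
    obtain ⟨M, hM, hfin, hdense, hker⟩ := this
    exact ⟨M, hM, hfin, fun x hx hx0 =>
      (hdense x hx hx0).mono (Set.range_comp_subset_range nk fun n => T n x), hker⟩
  by_cases hlead : ∀ n, ∃ u ∈ X0, u ≠ 0 ∧ p n u = 0
  · exact exists_hypercyclic_subspace_of_forall_exists_ne_zero hp hpm hq hqm _ h1 h2 hlead
  -- Otherwise `h2` makes `{0}` dense, so `Y` is indiscrete and `X0` may be replaced by `X`.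
  push Not at hlead
  obtain ⟨n, hn⟩ := hlead
  have hzero : Dense ({0} : Set Y) := (h2 n 0).mono <| by
    simp only [Set.iUnion_subset_iff, Set.image_subset_iff]
    rintro k - u ⟨hu, hun⟩
    by_cases hu0 : u = 0
    · simp [hu0]
    · exact absurd hun (hn u hu hu0)
  have hq0 : ∀ j y, q j y = 0 := fun j y =>
    closure_minimal (by simp) (isClosed_eq (hq.continuous_seminorm j) continuous_const) (hzero y)
  refine exists_hypercyclic_subspace_of_forall_exists_ne_zero hp hpm hq hqm _ (X0 := Set.univ)
    (fun j x _ => Eventually.of_forall fun k => hq0 j _) (fun n K => hzero.mono ?_) fun n => ?_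
  · exact Set.singleton_subset_iff.2
      (Set.mem_biUnion (le_refl K) ⟨0, ⟨trivial, map_zero _⟩, map_zero _⟩)
  · by_contra! h
    exact hnonorm ⟨p n, hp.continuous_seminorm n, fun x hx => h x trivial hx⟩

/-- Criterion for hypercyclic subspaces of type 2: if `X` is an infinite-dimensional
Fréchet space without continuous norm and the sequence `(T n)` of operators into a
separable topological vector space `Y` satisfies the two conditions below along `(n k)`,
then there is a closed infinite-dimensional subspace of hypercyclic vectors (plus 0)
meeting the kernel of every continuous seminorm in an infinite-dimensional subspace. -/
theorem hypercyclic_subspace_type2_criterion {𝕜 X Y : Type*} [RCLike 𝕜]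
    [AddCommGroup X] [Module 𝕜 X] [UniformSpace X] [IsUniformAddGroup X]
    [ContinuousSMul 𝕜 X] [CompleteSpace X] [T2Space X]
    [AddCommGroup Y] [Module 𝕜 Y] [TopologicalSpace Y] [IsTopologicalAddGroup Y]
    [ContinuousSMul 𝕜 Y] [TopologicalSpace.SeparableSpace Y]
    (p : ℕ → Seminorm 𝕜 X) (hp : WithSeminorms p) (hpm : ∀ n, p n ≤ p (n + 1))
    (hXinf : ¬ Module.Finite 𝕜 X)
    (hnonorm : ¬ ∃ q : Seminorm 𝕜 X, Continuous q ∧ ∀ x : X, x ≠ 0 → q x ≠ 0)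
    (q : ℕ → Seminorm 𝕜 Y) (hq : WithSeminorms q) (hqm : ∀ j, q j ≤ q (j + 1))
    (T : ℕ → X →L[𝕜] Y)
    (nk : ℕ → ℕ) (hnk : StrictMono nk) (X0 : Set X)
    (h1 : ∀ j : ℕ, ∀ x ∈ X0, ∀ᶠ k in Filter.atTop, q j (T (nk k) x) = 0)
    (h2 : ∀ n K : ℕ, Dense (⋃ k ≥ K, T (nk k) '' (X0 ∩ ((p n).kerSubmodule : Set X)))) :
    ∃ M : Submodule 𝕜 X, IsClosed (M : Set X) ∧ ¬ Module.Finite 𝕜 M ∧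
      (∀ x ∈ M, x ≠ 0 → Dense (Set.range fun n => T n x)) ∧
      (∀ r : Seminorm 𝕜 X, Continuous r → ¬ Module.Finite 𝕜 ↥(M ⊓ r.kerSubmodule)) :=
  hypercyclic_subspace_type2_criterion_general p hp hpm hnonorm q hq hqm T nk X0 h1 h2
end

section
/- Let ω = 𝕂^{ℤ₊} with the product topology and seminorms p_n(x) = max{|x_k| : 0 ≤ k ≤ n}, and let (T_k) be continuous linear operators on ω represented by matrices (a^{(k)}_{i,j}). If (T_k) possesses a hypercyclic subspace, then for all N ≥ 0, l ≥ 1, K ≥ 1, the set ⋃_{k≥K} span{(a^{(k)}_{i,j})_{i=0,…,l−1} : j ≥ N} is dense in 𝕂^l. -/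
open Filter Topology

lemma clm_finite_dep {𝕜 : Type*} [RCLike 𝕜] {E : Type*} [NormedAddCommGroup E]
    [NormedSpace 𝕜 E] (f : (ℕ → 𝕜) →L[𝕜] E) :
    ∃ n : ℕ, ∀ x : ℕ → 𝕜, (∀ j < n, x j = 0) → f x = 0 := by
  have h : IsOpen (f ⁻¹' Metric.ball 0 1) :=
    f.continuous.isOpen_preimage _ Metric.isOpen_ball
  have h0 : (0 : ℕ → 𝕜) ∈ f ⁻¹' Metric.ball 0 1 := by simp
  obtain ⟨I, u, hu, hsub⟩ := isOpen_pi_iff.mp h 0 h0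
  refine ⟨I.sup id + 1, fun x hx => ?_⟩
  have key : ∀ t : 𝕜, ‖f (t • x)‖ < 1 := by
    intro t
    have hmem : t • x ∈ (I : Set ℕ).pi u := by
      intro j hj
      have hxj : x j = 0 := hx j (Nat.lt_succ_of_le (Finset.le_sup (f := id) hj))
      have := (hu j hj).2
      simpa [hxj] using this
    have := hsub hmem
    simpa using this
  by_contra hne
  have hpos : 0 < ‖f x‖ := norm_pos_iff.mpr hne
  obtain ⟨t, ht⟩ := exists_nat_gt (‖f x‖⁻¹)
  have hk := key (t : 𝕜)
  rw [map_smul, norm_smul] at hk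
  have hn : ‖((t : ℕ) : 𝕜)‖ = (t : ℝ) := by simp
  rw [hn] at hk
  have : (1 : ℝ) < t * ‖f x‖ := by
    have := (inv_lt_iff_one_lt_mul₀ hpos).mp ht
    linarith
  linarith

lemma clm_eq_sum {𝕜 : Type*} [RCLike 𝕜] {E : Type*} [NormedAddCommGroup E]
    [NormedSpace 𝕜 E] (f : (ℕ → 𝕜) →L[𝕜] E) (n : ℕ)
    (hA : ∀ x : ℕ → 𝕜, (∀ j < n, x j = 0) → f x = 0) (x : ℕ → 𝕜) :
    f x = ∑ j ∈ Finset.range n, x j • f (Pi.single j 1) := by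
  have h0 : f (x - ∑ j ∈ Finset.range n, x j • (Pi.single j (1:𝕜) : ℕ → 𝕜)) = 0 := by
    apply hA
    intro j hj
    simp [Finset.sum_apply, Pi.single_apply, Finset.sum_ite_eq, hj, mul_comm]
  rw [map_sub, map_sum] at h0
  simp only [map_smul] at h0
  exact sub_eq_zero.mp h0

/-- Necessary condition for a sequence of operators on `ω = 𝕜^ℕ` (with the product
topology) to have a hypercyclic subspace: the unions over `k ≥ K` of the spans of the
truncated columns `(T k e j)_{i < l}`, `j ≥ N`, are dense in `𝕜^l`. -/
theorem dense_truncated_columns_of_hypercyclic_subspace {𝕜 : Type*} [RCLike 𝕜]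
    (T : ℕ → (ℕ → 𝕜) →L[𝕜] (ℕ → 𝕜))
    (M : Submodule 𝕜 (ℕ → 𝕜)) (hMc : IsClosed (M : Set (ℕ → 𝕜)))
    (hMinf : ¬ Module.Finite 𝕜 M)
    (hhc : ∀ x ∈ M, x ≠ 0 → Dense (Set.range fun k => T k x)) :
    ∀ N l K : ℕ, 1 ≤ l →
      Dense (⋃ k ≥ K, (Submodule.span 𝕜
        {v : Fin l → 𝕜 | ∃ j ≥ N, v = fun i : Fin l => T k (Pi.single j 1) (i : ℕ)} :
          Set (Fin l → 𝕜))) := by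
  intro N l K _hl
  classical
  -- the truncation continuous linear map
  set π : (ℕ → 𝕜) →L[𝕜] (Fin l → 𝕜) :=
    ContinuousLinearMap.pi (fun i : Fin l => ContinuousLinearMap.proj (i : ℕ)) with hπ
  have hπapp : ∀ (y : ℕ → 𝕜) (i : Fin l), π y i = y i := fun y i => rfl
  -- for each k, the truncated operator depends on finitely many coordinates
  have hfd : ∀ k : ℕ, ∃ n : ℕ, ∀ x : ℕ → 𝕜, (∀ j < n, x j = 0) → (π ∘L T k) x = 0 :=
    fun k => clm_finite_dep (π ∘L T k)
  choose nk hnk using hfd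
  set n : ℕ := N ⊔ (Finset.range K).sup nk with hn
  -- find a nonzero vector of M vanishing on the first n coordinates
  set ψ : M →ₗ[𝕜] (Fin n → 𝕜) :=
    LinearMap.pi (fun j : Fin n => (LinearMap.proj (j : ℕ)).comp M.subtype) with hψ
  have hker : LinearMap.ker ψ ≠ ⊥ := by
    intro hbot
    exact hMinf (FiniteDimensional.of_injective ψ (LinearMap.ker_eq_bot.mp hbot))
  obtain ⟨m, hmker, hm0⟩ := Submodule.exists_mem_ne_zero_of_ne_bot hker
  set x : ℕ → 𝕜 := (m : ℕ → 𝕜) with hx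
  have hxM : x ∈ M := m.2
  have hxne : x ≠ 0 := fun h => hm0 (Subtype.ext h)
  have hxvan : ∀ j < n, x j = 0 := by
    intro j hj
    have := congrFun hmker ⟨j, hj⟩
    exact this
  have hd : Dense (Set.range fun k => T k x) := hhc x hxM hxne
  -- the image of the orbit under π is dense
  have himg : Dense (π '' Set.range fun k => T k x) := by
    rw [dense_iff_inter_open]
    intro U hU hUne
    obtain ⟨v, hv⟩ := hUne
    set w : ℕ → 𝕜 := fun j => if h : j < l then v ⟨j, h⟩ else 0 with hw
    have hπw : π w = v := by
      ext i
      simp [hπapp, hw, i.isLt]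
    have hwU : w ∈ π ⁻¹' U := by
      rw [Set.mem_preimage, hπw]; exact hv
    obtain ⟨y, hyU, hyr⟩ := (dense_iff_inter_open.mp hd) (π ⁻¹' U)
      (hU.preimage π.continuous) ⟨w, hwU⟩
    exact ⟨π y, hyU, ⟨y, hyr, rfl⟩⟩
  refine himg.mono ?_
  rintro z ⟨y, ⟨k, rfl⟩, rfl⟩
  by_cases hk : K ≤ k
  · -- π (T k x) belongs to the span for this k
    have heq : π (T k x) = ∑ j ∈ Finset.range (nk k), x j • (π ∘L T k) (Pi.single j 1) :=
      clm_eq_sum (π ∘L T k) (nk k) (hnk k) x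
    refine Set.mem_iUnion₂.mpr ⟨k, hk, ?_⟩
    rw [heq]
    apply Submodule.sum_mem
    intro j _
    by_cases hxj : x j = 0
    · simp [hxj]
    · have hjN : N ≤ j := by
        by_contra hlt
        exact hxj (hxvan j (lt_of_lt_of_le (not_le.mp hlt) (le_sup_left.trans le_rfl)))
      refine Submodule.smul_mem _ _ (Submodule.subset_span ?_)
      exact ⟨j, hjN, rfl⟩
  · -- π (T k x) = 0, which lies in the span for k = K
    have hkK : k < K := not_le.mp hk
    have hle : nk k ≤ n := le_trans (Finset.le_sup (Finset.mem_range.mpr hkK)) le_sup_right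
    have h0 : π (T k x) = 0 :=
      hnk k x (fun j hj => hxvan j (lt_of_lt_of_le hj hle))
    rw [h0]
    exact Set.mem_iUnion₂.mpr ⟨K, le_rfl, Submodule.zero_mem _⟩
end
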